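/- arXiv:1611.10142 — 10 statements merged into one kernel-verified Lean document; each statement's English description precedes it below -/
import Mathlib

section
/- Let d ≥ 1, k ≥ 1 and n = dk. Let M_0, …, M_{d−1} ∈ ℂ^{k×k} with M_0 lower triangular, and let S ∈ ℂ^{n×n} be the associated block companion matrix. Then there exist vectors c_1, …, c_k ∈ ℂ^n such that S = (J − c_1 e_n^T)(J − c_2 e_n^T) ⋯ (J − c_k e_n^T), where J is the n×n downshift matrix; that is, S factors as a product of k Frobenius companion matrices of monic scalar polynomials of degree n. -/
/-!
Peel off one Frobenius factor at a time. Suppose the first `n - m` columns of `T` are those of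
`J ^ m` and `T p q = 0` whenever `p + n < q + m`. With `j = n - m - 1`, the first row of `T`
vanishes outside column `j`, and then `T = (J + T eⱼ eₙᵀ) T'`, where `T' = Jᵀ T` (the rows of `T`
shifted up) with column `j` replaced by `eₙ`: indeed `J Jᵀ` is the identity except in the first
row, `eₙᵀ Jᵀ = 0` and `(J + T eⱼ eₙᵀ) eₙ = T eⱼ`. The matrix `T'` has the same shape with `m - 1`
in place of `m`, so induction gives `m` factors. The block companion matrix has this shape with
`m = k` because `M 0` is lower triangular.
-/

open Matrix

noncomputable section

/-- The `n × n` downshift matrix `J`: ones on the subdiagonal, zeros elsewhere. -/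
def downshift (n : ℕ) : Matrix (Fin n) (Fin n) ℂ :=
  fun p q => if (p : ℕ) = (q : ℕ) + 1 then 1 else 0

/-- The `dk × dk` block companion matrix built from `M 0, …, M (d-1)`:
identity blocks on the block subdiagonal and `-M (i)` in block row `i` (0-based) of the
last block column. -/
def blockCompanion (d k : ℕ) (hk : 0 < k) (M : ℕ → Matrix (Fin k) (Fin k) ℂ) :
    Matrix (Fin (d * k)) (Fin (d * k)) ℂ :=
  fun p q =>
    if (q : ℕ) < (d - 1) * k then (if (p : ℕ) = (q : ℕ) + k then 1 else 0)
    else - M ((p : ℕ) / k) ⟨(p : ℕ) % k, Nat.mod_lt _ hk⟩ ⟨(q : ℕ) % k, Nat.mod_lt _ hk⟩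

def frobeniusCompanion {n : ℕ} (hn : 0 < n) (c : Fin n → ℂ) : Matrix (Fin n) (Fin n) ℂ :=
  downshift n - vecMulVec c (Pi.single ⟨n - 1, by omega⟩ 1)

section Downshift

variable {n : ℕ} {α : Type*}

lemma downshift_apply_last (hn : 0 < n) (p : Fin n) : downshift n p ⟨n - 1, by omega⟩ = 0 := by
  have := p.isLt
  simp only [downshift]
  exact if_neg (by omega)

lemma downshift_mul_apply (A : Matrix (Fin n) α ℂ) (p : Fin n) (q : α) :
    (downshift n * A) p q = if h : 0 < (p : ℕ) then A ⟨p - 1, by omega⟩ q else 0 := by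
  rw [mul_apply]
  split_ifs with hp
  · rw [Fintype.sum_eq_single ⟨p - 1, by omega⟩]
    · simp only [downshift, if_pos (show (p : ℕ) = p - 1 + 1 by omega), one_mul]
    · intro r hr
      simp only [ne_eq, Fin.ext_iff] at hr
      simp only [downshift, if_neg (show ¬(p : ℕ) = r + 1 by omega), zero_mul]
  · refine Finset.sum_eq_zero fun r _ => ?_
    simp only [downshift, if_neg (show ¬(p : ℕ) = r + 1 by omega), zero_mul]

lemma transpose_downshift_mul_apply (A : Matrix (Fin n) α ℂ) (p : Fin n) (q : α) :
    ((downshift n)ᵀ * A) p q = if h : (p : ℕ) + 1 < n then A ⟨p + 1, h⟩ q else 0 := by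
  rw [mul_apply]
  split_ifs with hp
  · rw [Fintype.sum_eq_single ⟨p + 1, hp⟩]
    · simp only [transpose_apply, downshift, if_true, one_mul]
    · intro r hr
      simp only [ne_eq, Fin.ext_iff] at hr
      simp only [transpose_apply, downshift, if_neg hr, zero_mul]
  · refine Finset.sum_eq_zero fun r _ => ?_
    simp only [transpose_apply, downshift, if_neg (show ¬(r : ℕ) = p + 1 by omega), zero_mul]

lemma downshift_mul_transpose_downshift_mul (hn : 0 < n) (A : Matrix (Fin n) α ℂ) :
    downshift n * ((downshift n)ᵀ * A) = A.updateRow ⟨0, hn⟩ 0 := by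
  ext p q
  have := p.isLt
  rw [downshift_mul_apply, updateRow_apply]
  split_ifs with h₁ h₂ h₂
  · simp only [Fin.ext_iff] at h₂
    omega
  · rw [transpose_downshift_mul_apply, dif_pos (by simp only; omega)]
    congr
    simp only
    omega
  · rfl
  · simp only [Fin.ext_iff] at h₂
    omega

end Downshift

section FrobeniusCompanion

variable {n : ℕ} (hn : 0 < n)

lemma frobeniusCompanion_mulVec_single_last (c : Fin n → ℂ) :
    frobeniusCompanion hn c *ᵥ Pi.single ⟨n - 1, by omega⟩ 1 = -c := by
  ext p
  simp [frobeniusCompanion, downshift_apply_last hn p, vecMulVec_apply]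

lemma frobeniusCompanion_mul_transpose_downshift_mul {α : Type*} (c : Fin n → ℂ)
    (A : Matrix (Fin n) α ℂ) :
    frobeniusCompanion hn c * ((downshift n)ᵀ * A) = A.updateRow ⟨0, hn⟩ 0 := by
  have hlast : (Pi.single ⟨n - 1, by omega⟩ 1 : Fin n → ℂ) ᵥ* ((downshift n)ᵀ * A) = 0 := by
    ext q
    rw [single_one_vecMul, row_apply, transpose_downshift_mul_apply, dif_neg (by simp; omega)]
    rfl
  rw [frobeniusCompanion, Matrix.sub_mul, vecMulVec_mul, hlast,
    downshift_mul_transpose_downshift_mul hn, sub_eq_self]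
  ext
  simp [vecMulVec_apply]

lemma eq_frobeniusCompanion_mul_updateCol (T : Matrix (Fin n) (Fin n) ℂ) (j : Fin n)
    (hrow : ∀ q, q ≠ j → T ⟨0, hn⟩ q = 0) :
    T = frobeniusCompanion hn (-T.col j) *
      ((downshift n)ᵀ * T).updateCol j (Pi.single ⟨n - 1, by omega⟩ 1) := by
  rw [mul_updateCol, frobeniusCompanion_mulVec_single_last,
    frobeniusCompanion_mul_transpose_downshift_mul, neg_neg]
  ext p q
  rw [updateCol_apply, updateRow_apply]
  split_ifs with hq hp
  · rw [hq, col_apply]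
  · rw [hp, Pi.zero_apply, hrow q hq]
  · rfl

theorem exists_eq_prod_frobeniusCompanion (m : ℕ) (hm : m ≤ n) (T : Matrix (Fin n) (Fin n) ℂ)
    (hshift : ∀ p q : Fin n, (q : ℕ) + m < n → T p q = if (p : ℕ) = q + m then 1 else 0)
    (hzero : ∀ p q : Fin n, (p : ℕ) + n < q + m → T p q = 0) :
    ∃ c : Fin m → Fin n → ℂ,
      T = ((List.finRange m).map fun i => frobeniusCompanion hn (c i)).prod := by
  induction m generalizing T with
  | zero =>
    refine ⟨finZeroElim, ?_⟩
    ext p q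
    simp only [hshift p q (by omega), List.finRange_zero, List.map_nil, List.prod_nil, one_apply,
      Fin.ext_iff, add_zero]
  | succ m ih =>
    obtain ⟨j, hj⟩ : ∃ j : Fin n, (j : ℕ) + m + 1 = n := ⟨⟨n - m - 1, by omega⟩, by simp only; omega⟩
    set T' := ((downshift n)ᵀ * T).updateCol j (Pi.single ⟨n - 1, by omega⟩ 1) with hT'
    have hrow : ∀ q, q ≠ j → T ⟨0, hn⟩ q = 0 := by
      intro q hq
      rw [ne_eq, Fin.ext_iff] at hq
      by_cases hq' : (q : ℕ) + (m + 1) < n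
      · rw [hshift _ q hq', if_neg (by simp only; omega)]
      · exact hzero _ q (by simp only; omega)
    have hshift' : ∀ p q : Fin n, (q : ℕ) + m < n → T' p q = if (p : ℕ) = q + m then 1 else 0 := by
      intro p q hq
      by_cases hqj : q = j
      · rw [hT', hqj, updateCol_self]
        simp only [Pi.single_apply, Fin.ext_iff]
        split_ifs <;> first | rfl | omega
      · have hq' : (q : ℕ) + (m + 1) < n := by rw [Fin.ext_iff] at hqj; omega
        rw [hT', updateCol_ne hqj, transpose_downshift_mul_apply]
        simp only [hshift _ _ hq']
        split_ifs <;> first | rfl | omega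
    have hzero' : ∀ p q : Fin n, (p : ℕ) + n < q + m → T' p q = 0 := by
      intro p q hpq
      rw [hT', updateCol_apply, if_neg (by rw [Fin.ext_iff]; omega),
        transpose_downshift_mul_apply]
      split_ifs
      · exact hzero _ _ (by simp only; omega)
      · rfl
    obtain ⟨c, hc⟩ := ih (by omega) T' hshift' hzero'
    refine ⟨Fin.cons (-T.col j) c, ?_⟩
    rw [List.finRange_succ, List.map_cons, List.prod_cons, List.map_map]
    exact (eq_frobeniusCompanion_mul_updateCol hn T j hrow).trans (congrArg _ hc)

end FrobeniusCompanion

section BlockCompanion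

variable {d k : ℕ} (hk : 0 < k) {M : ℕ → Matrix (Fin k) (Fin k) ℂ}

lemma blockCompanion_apply_of_add_lt (p q : Fin (d * k)) (hq : (q : ℕ) + k < d * k) :
    blockCompanion d k hk M p q = if (p : ℕ) = q + k then 1 else 0 := by
  rw [blockCompanion, if_pos (by rw [Nat.sub_one_mul]; omega)]

lemma blockCompanion_apply_eq_zero (hM0 : ∀ i j : Fin k, i < j → M 0 i j = 0)
    (p q : Fin (d * k)) (hpq : (p : ℕ) + d * k < q + k) :
    blockCompanion d k hk M p q = 0 := by
  have hq := q.isLt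
  have hkd : k ≤ d * k := Nat.le_mul_of_pos_left k (Nat.pos_of_ne_zero (by rintro rfl; omega))
  have hK := Nat.sub_one_mul d k
  have hp : (p : ℕ) < k := by omega
  rw [blockCompanion, if_neg (by omega), neg_eq_zero, Nat.div_eq_of_lt hp]
  refine hM0 _ _ (Fin.lt_def.mpr ?_)
  obtain ⟨r, hr⟩ : ∃ r, (q : ℕ) = r + (d - 1) * k := ⟨q - (d - 1) * k, by omega⟩
  have hrk : r < k := by omega
  simp only [hr, Nat.add_mul_mod_self_right, Nat.mod_eq_of_lt hp, Nat.mod_eq_of_lt hrk]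
  omega

end BlockCompanion

/-- **Frobenius factorization.**  If `M 0` is lower triangular, the block companion matrix
factors as a product of `k` Frobenius companion matrices `J - cⱼ eₙᵀ` of monic scalar
polynomials of degree `n = d * k`. -/
theorem frobenius_factorization (d k : ℕ) (hd : 1 ≤ d) (hk : 1 ≤ k)
    (M : ℕ → Matrix (Fin k) (Fin k) ℂ)
    (hM0 : ∀ i j : Fin k, i < j → M 0 i j = 0) :
    ∃ c : Fin k → (Fin (d * k) → ℂ),
      blockCompanion d k hk M =
        ((List.finRange k).map (fun j =>
          downshift (d * k) -
            vecMulVec (c j)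
              (Pi.single (⟨d * k - 1, by have := Nat.mul_pos hd hk; omega⟩ : Fin (d * k))
                1))).prod :=
  exists_eq_prod_frobeniusCompanion (Nat.mul_pos hd hk) k (Nat.le_mul_of_pos_left k hd) _
    (blockCompanion_apply_of_add_lt hk) (blockCompanion_apply_eq_zero hk hM0)
end
end

section
/- Let d ≥ 1, k ≥ 1, n = dk, let M_0, …, M_{d−1} ∈ ℂ^{k×k}, and let S ∈ ℂ^{n×n} be the associated block companion matrix. Let Q ∈ ℂ^{n×n} be the cyclic shift matrix and let R ∈ ℂ^{n×n} be the d×d block matrix having I_k in block position (i,i) for i = 1,…,d−1, block (i,d) equal to −M_i for i = 1,…,d−1, block (d,d) equal to −M_0, and zero blocks elsewhere. Then Q is unitary, Q^k is the block cyclic shift (the block matrix with I_k in block positions (i+1,i) for i = 1,…,d−1 and in block position (1,d), and zeros elsewhere), and S = Q^k R; moreover, if M_0 is upper triangular then R is upper triangular. -/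
open Matrix

noncomputable section

/-- The `n × n` cyclic shift matrix `Q`: `Q e_i = e_{i+1}` for `i < n`, `Q e_n = e_1`. -/
def cyclicShift (n : ℕ) : Matrix (Fin n) (Fin n) ℂ :=
  fun p q => if (p : ℕ) = ((q : ℕ) + 1) % n then 1 else 0

/-- The `dk × dk` block cyclic shift: identity blocks on the block subdiagonal and the
identity in block position `(1, d)`. -/
def blockCyclicShift (d k : ℕ) : Matrix (Fin (d * k)) (Fin (d * k)) ℂ :=
  fun p q =>
    if (q : ℕ) < (d - 1) * k then (if (p : ℕ) = (q : ℕ) + k then 1 else 0)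
    else (if (p : ℕ) + (d - 1) * k = (q : ℕ) then 1 else 0)

/-- The upper triangular factor `R` of `S = Q^k R`: identity blocks on the block
diagonal except the last, last block column carrying `−M 1, …, −M (d−1), −M 0`. -/
def gaussR (d k : ℕ) (hk : 0 < k) (M : ℕ → Matrix (Fin k) (Fin k) ℂ) :
    Matrix (Fin (d * k)) (Fin (d * k)) ℂ :=
  fun p q =>
    if (q : ℕ) < (d - 1) * k then (if p = q then 1 else 0)
    else - M (if (p : ℕ) < (d - 1) * k then (p : ℕ) / k + 1 else 0)
            ⟨(p : ℕ) % k, Nat.mod_lt _ hk⟩ ⟨(q : ℕ) % k, Nat.mod_lt _ hk⟩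

lemma shift_inj {n : ℕ} {a b : Fin n} (h : ((a:ℕ) + 1) % n = ((b:ℕ) + 1) % n) : a = b := by
  have hn : 0 < n := a.pos
  have := congrArg (fun x => (x + (n-1)) % n) h
  simp only [Nat.mod_add_mod] at this
  rw [show (a:ℕ) + 1 + (n-1) = a + n by omega, show (b:ℕ) + 1 + (n-1) = b + n by omega,
    Nat.add_mod_right, Nat.add_mod_right, Nat.mod_eq_of_lt a.isLt, Nat.mod_eq_of_lt b.isLt] at this
  exact Fin.ext this

lemma cyclicShift_pow {n : ℕ} (hn : 0 < n) (m : ℕ) (p q : Fin n) :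
    ((cyclicShift n) ^ m) p q = if (p:ℕ) = ((q:ℕ) + m) % n then 1 else 0 := by
  induction m generalizing q with
  | zero => simp [Matrix.one_apply, Nat.mod_eq_of_lt q.isLt, Fin.ext_iff]
  | succ m ih =>
    rw [pow_succ, Matrix.mul_apply]
    have key : ∀ r : Fin n, cyclicShift n r q
        = if (⟨((q:ℕ)+1) % n, Nat.mod_lt _ hn⟩ : Fin n) = r then 1 else 0 := by
      intro r; simp [cyclicShift, Fin.ext_iff, eq_comm]
    simp only [key, mul_ite, mul_one, mul_zero, Finset.sum_ite_eq, Finset.mem_univ, if_true]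
    rw [ih]
    simp only [Nat.mod_add_mod]
    rw [show ((q:ℕ) + 1 + m) = (q:ℕ) + (m+1) by omega]

lemma shift_eq_iff {n k s : ℕ} (hsk : s + k = n) (p r : Fin n) :
    ((p:ℕ) = ((r:ℕ) + k) % n) ↔ ((r:ℕ) = ((p:ℕ) + s) % n) := by
  constructor
  · intro h
    rw [h, Nat.mod_add_mod, show (r:ℕ) + k + s = (r:ℕ) + n by omega,
      Nat.add_mod_right, Nat.mod_eq_of_lt r.isLt]
  · intro h
    rw [h, Nat.mod_add_mod, show (p:ℕ) + s + k = (p:ℕ) + n by omega,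
      Nat.add_mod_right, Nat.mod_eq_of_lt p.isLt]

lemma cyclicShift_unitary (n : ℕ) (hn : 0 < n) :
    cyclicShift n ∈ Matrix.unitaryGroup (Fin n) ℂ := by
  rw [Matrix.mem_unitaryGroup_iff']
  ext p q
  rw [Matrix.mul_apply, Matrix.one_apply]
  have key : ∀ r : Fin n, cyclicShift n r q
      = if (⟨((q:ℕ)+1) % n, Nat.mod_lt _ hn⟩ : Fin n) = r then 1 else 0 := by
    intro r; simp [cyclicShift, Fin.ext_iff, eq_comm]
  simp only [Matrix.star_apply, key, mul_ite, mul_one, mul_zero, Finset.sum_ite_eq,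
    Finset.mem_univ, if_true]
  simp only [cyclicShift, apply_ite (star : ℂ → ℂ), star_one, star_zero]
  by_cases h : p = q
  · subst h; simp
  · rw [if_neg h, if_neg]
    intro hc
    exact h (shift_inj hc.symm)

/-- `Q` is unitary, `Q^k` is the block cyclic shift, `S = Q^k R`, and `R` is upper
triangular provided `M 0` is upper triangular. -/
theorem companion_qr (d k : ℕ) (hd : 1 ≤ d) (hk : 1 ≤ k)
    (M : ℕ → Matrix (Fin k) (Fin k) ℂ) :
    cyclicShift (d * k) ∈ Matrix.unitaryGroup (Fin (d * k)) ℂ ∧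
    (cyclicShift (d * k)) ^ k = blockCyclicShift d k ∧
    blockCompanion d k hk M = (cyclicShift (d * k)) ^ k * gaussR d k hk M ∧
    ((∀ i j : Fin k, j < i → M 0 i j = 0) →
      ∀ p q : Fin (d * k), q < p → gaussR d k hk M p q = 0) := by
  have hn : 0 < d * k := Nat.mul_pos hd hk
  have hs : (d - 1) * k + k = d * k := by
    cases d with
    | zero => omega
    | succ d' => simp [Nat.succ_sub_one, Nat.succ_mul]
  have meq : ∀ (i i' : ℕ) (a a' b b' : Fin k), i = i' → (a:ℕ) = (a':ℕ) → (b:ℕ) = (b':ℕ) →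
      M i a b = M i' a' b' := by
    rintro i i' a a' b b' rfl h h'
    rw [Fin.ext_iff.mpr h, Fin.ext_iff.mpr h']
  refine ⟨cyclicShift_unitary _ hn, ?_, ?_, ?_⟩
  · -- Q^k = blockCyclicShift
    ext p q
    rw [cyclicShift_pow hn]
    have hp2 : (p:ℕ) < d*k := p.isLt
    have hq2 : (q:ℕ) < d*k := q.isLt
    unfold blockCyclicShift
    by_cases hq : (q:ℕ) < (d-1)*k
    · rw [if_pos hq, Nat.mod_eq_of_lt (by omega)]
    · rw [if_neg hq,
        show (q:ℕ) + k = ((q:ℕ) - (d-1)*k) + d*k by omega, Nat.add_mod_right,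
        Nat.mod_eq_of_lt (by omega),
        if_congr (show ((p:ℕ) = (q:ℕ) - (d-1)*k) ↔ ((p:ℕ) + (d-1)*k = (q:ℕ)) by omega) rfl rfl]
  · -- S = Q^k R
    ext p q
    rw [Matrix.mul_apply]
    have hp2 : (p:ℕ) < d*k := p.isLt
    have hq2 : (q:ℕ) < d*k := q.isLt
    set r0 : Fin (d*k) := ⟨((p:ℕ) + (d-1)*k) % (d*k), Nat.mod_lt _ hn⟩ with hr0
    have key : ∀ r : Fin (d*k), ((cyclicShift (d*k))^k) p r = if r0 = r then 1 else 0 := by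
      intro r
      rw [cyclicShift_pow hn]
      by_cases h : (p:ℕ) = ((r:ℕ) + k) % (d*k)
      · rw [if_pos h, if_pos (Fin.ext ((shift_eq_iff hs p r).mp h).symm)]
      · rw [if_neg h, if_neg]
        intro hc
        exact h ((shift_eq_iff hs p r).mpr (congrArg Fin.val hc).symm)
    simp only [key, ite_mul, one_mul, zero_mul, Finset.sum_ite_eq, Finset.mem_univ, if_true]
    have hr0v : (r0:ℕ) = ((p:ℕ) + (d-1)*k) % (d*k) := rfl
    unfold blockCompanion gaussR
    by_cases hq : (q:ℕ) < (d-1)*k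
    · rw [if_pos hq, if_pos hq]
      have h1 : ((q:ℕ) + k) % (d*k) = (q:ℕ) + k := Nat.mod_eq_of_lt (by omega)
      refine if_congr ?_ rfl rfl
      rw [Fin.ext_iff]
      constructor
      · intro h
        have := (shift_eq_iff hs p q).mp (by rw [h, h1])
        omega
      · intro h
        have := (shift_eq_iff hs p q).mpr (by omega : (q:ℕ) = ((p:ℕ) + (d-1)*k) % (d*k))
        rw [h1] at this
        exact this
    · rw [if_neg hq, if_neg hq, neg_inj]
      by_cases hpk : (p:ℕ) < k
      · have hv : (r0:ℕ) = (p:ℕ) + (d-1)*k := Nat.mod_eq_of_lt (by omega)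
        apply meq
        · rw [if_neg (show ¬ ((r0:ℕ) < (d-1)*k) by omega)]
          exact Nat.div_eq_of_lt hpk
        · show (p:ℕ) % k = (r0:ℕ) % k
          rw [hv, Nat.add_mul_mod_self_right]
        · rfl
      · have hv : (r0:ℕ) = (p:ℕ) - k := by
          rw [hr0v, show (p:ℕ) + (d-1)*k = ((p:ℕ) - k) + d*k by omega, Nat.add_mod_right,
            Nat.mod_eq_of_lt (by omega)]
        have hdiv : (p:ℕ)/k = ((p:ℕ) - k)/k + 1 := by
          have h := Nat.add_div_right ((p:ℕ) - k) hk
          rw [show (p:ℕ)-k+k = (p:ℕ) by omega] at h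
          exact h
        have hmod : (p:ℕ) % k = ((p:ℕ) - k) % k := by
          conv_lhs => rw [show (p:ℕ) = ((p:ℕ)-k) + k by omega]
          rw [Nat.add_mod_right]
        apply meq
        · rw [if_pos (show (r0:ℕ) < (d-1)*k by omega), hv, hdiv]
        · show (p:ℕ) % k = (r0:ℕ) % k
          rw [hv, hmod]
        · rfl
  · -- triangularity
    intro hM p q hlt
    have hp2 : (p:ℕ) < d*k := p.isLt
    have hq2 : (q:ℕ) < d*k := q.isLt
    have hlt' : (q:ℕ) < (p:ℕ) := hlt
    unfold gaussR
    by_cases hq : (q:ℕ) < (d-1)*k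
    · rw [if_pos hq, if_neg (by intro h; subst h; exact lt_irrefl _ hlt)]
    · rw [if_neg hq, if_neg (show ¬ ((p:ℕ) < (d-1)*k) by omega), neg_eq_zero]
      apply hM
      have hpm : (p:ℕ) % k = (p:ℕ) - (d-1)*k := by
        conv_lhs => rw [show (p:ℕ) = ((p:ℕ) - (d-1)*k) + (d-1)*k by omega]
        rw [Nat.add_mul_mod_self_right, Nat.mod_eq_of_lt (by omega)]
      have hqm : (q:ℕ) % k = (q:ℕ) - (d-1)*k := by
        conv_lhs => rw [show (q:ℕ) = ((q:ℕ) - (d-1)*k) + (d-1)*k by omega]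
        rw [Nat.add_mul_mod_self_right, Nat.mod_eq_of_lt (by omega)]
      simp only [Fin.lt_def]
      show (q:ℕ) % k < (p:ℕ) % k
      omega
end
end

section
/- Let n ≥ 1. Let C_1, …, C_n and B_1, …, B_n be core transformations in ℂ^{(n+1)×(n+1)}, where C_j and B_j have active part at position j, and assume every C_j is nontrivial. Set C = C_1 C_2 ⋯ C_n, B = B_1 B_2 ⋯ B_n, let y ∈ ℂ^{n+1}, and assume that the last row of C^*(B + e_1 y^T) is zero, i.e. e_{n+1}^T C^*(B + e_1 y^T) = 0. Let R ∈ ℂ^{n×n} be the leading principal n×n submatrix of C^*(B + e_1 y^T). Then R is upper triangular, and for every ℓ ∈ {1,…,n} the diagonal entry R_{ℓℓ} equals zero if and only if B_ℓ is trivial. -/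
open Matrix

noncomputable section

/-- A core transformation with active part at position `j` (0-based; rows/columns
`j` and `j+1` of an `(n+1) × (n+1)` matrix): a unitary matrix equal to the identity
outside the 2×2 principal submatrix in rows and columns `j, j+1`. -/
def IsCore {n : ℕ} (j : Fin n) (U : Matrix (Fin (n + 1)) (Fin (n + 1)) ℂ) : Prop :=
  U ∈ Matrix.unitaryGroup (Fin (n + 1)) ℂ ∧
  ∀ p q : Fin (n + 1),
    ¬((p = j.castSucc ∨ p = j.succ) ∧ (q = j.castSucc ∨ q = j.succ)) →
      U p q = if p = q then 1 else 0

/-- Ordered product `A 0 * A 1 * ⋯ * A (k-1)` of a finite sequence of matrices. -/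
def seqProd {m k : ℕ} (A : Fin k → Matrix (Fin m) (Fin m) ℂ) : Matrix (Fin m) (Fin m) ℂ :=
  ((List.finRange k).map A).prod

namespace RtriHelper

variable {n : ℕ}

lemma core_apply {j : Fin n} {U : Matrix (Fin (n+1)) (Fin (n+1)) ℂ} (hU : IsCore j U)
    {p q : Fin (n+1)}
    (h : ¬(((p:ℕ) = j ∨ (p:ℕ) = (j:ℕ)+1) ∧ ((q:ℕ) = j ∨ (q:ℕ) = (j:ℕ)+1))) :
    U p q = if p = q then 1 else 0 := by
  apply hU.2
  simpa [Fin.ext_iff] using h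

def pprod (C : Fin n → Matrix (Fin (n+1)) (Fin (n+1)) ℂ) (k : ℕ) :
    Matrix (Fin (n+1)) (Fin (n+1)) ℂ :=
  (((List.finRange n).take k).map C).prod

lemma pprod_zero (C : Fin n → Matrix (Fin (n+1)) (Fin (n+1)) ℂ) : pprod C 0 = 1 := rfl

lemma pprod_succ (C : Fin n → Matrix (Fin (n+1)) (Fin (n+1)) ℂ) {k : ℕ} (hk : k < n) :
    pprod C (k+1) = pprod C k * C ⟨k, hk⟩ := by
  unfold pprod
  rw [List.take_succ]
  have h : (List.finRange n)[k]? = some ⟨k, hk⟩ := by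
    rw [List.getElem?_eq_getElem (by simpa using hk)]
    simp
  rw [h]
  simp

lemma pprod_n (C : Fin n → Matrix (Fin (n+1)) (Fin (n+1)) ℂ) : pprod C n = seqProd C := by
  unfold pprod seqProd
  rw [List.take_of_length_le (by simp)]

lemma pprod_inv (C : Fin n → Matrix (Fin (n+1)) (Fin (n+1)) ℂ)
    (hC : ∀ j, IsCore j (C j)) :
    ∀ k, k ≤ n →
    (∀ p q : Fin (n+1), (q:ℕ)+1 < p → pprod C k p q = 0) ∧
    (∀ p q : Fin (n+1), (k < (p:ℕ) ∨ k < (q:ℕ)) → pprod C k p q = if p = q then 1 else 0) ∧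
    (∀ j : Fin n, (j:ℕ) < k → pprod C k j.succ j.castSucc = C j j.succ j.castSucc) := by
  intro k
  induction k with
  | zero =>
    intro _
    refine ⟨?_, ?_, ?_⟩
    · intro p q h
      rw [pprod_zero]
      exact Matrix.one_apply_ne (by intro hpq; subst hpq; omega)
    · intro p q _
      rw [pprod_zero, Matrix.one_apply]
    · intro j hj; omega
  | succ k ih =>
    intro hk1
    have hkn : k < n := hk1
    obtain ⟨ih1, ih2, ih3⟩ := ih (le_of_lt hkn)
    set jk : Fin n := ⟨k, hkn⟩ with hjk
    have hjkv : ((jk : Fin n) : ℕ) = k := rfl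
    have hstep : pprod C (k+1) = pprod C k * C jk := pprod_succ C hkn
    refine ⟨?_, ?_, ?_⟩
    · -- Hessenberg
      intro p q hpq
      rw [hstep, Matrix.mul_apply]
      apply Finset.sum_eq_zero
      intro m _
      by_cases hband : (((m:ℕ) = (jk:ℕ) ∨ (m:ℕ) = (jk:ℕ)+1) ∧ ((q:ℕ) = (jk:ℕ) ∨ (q:ℕ) = (jk:ℕ)+1))
      · -- in the band: show pprod C k p m = 0
        have hm : pprod C k p m = 0 := by
          rcases hband with ⟨hm, hq⟩
          rcases hm with hm | hm
          · rcases hq with hq | hq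
            · exact ih1 p m (by omega)
            · rw [ih2 p m (by omega)]
              exact if_neg (by intro h; subst h; omega)
          · rw [ih2 p m (by omega)]
            exact if_neg (by intro h; subst h; omega)
        rw [hm, zero_mul]
      · rw [core_apply (hC jk) hband]
        by_cases hmq : m = q
        · subst hmq
          rw [ih1 p m (by omega)]
          simp
        · rw [if_neg hmq, mul_zero]
    · -- identity outside 0..k+1
      intro p q hpq
      rw [hstep, Matrix.mul_apply]
      rcases hpq with hp | hq
      · -- row p of pprod C k is e_p
        have hrow : ∀ m : Fin (n+1), pprod C k p m * C jk m q
            = (if p = m then 1 else 0) * C jk m q := by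
          intro m; rw [ih2 p m (Or.inl (by omega))]
        rw [Finset.sum_congr rfl (fun m _ => hrow m)]
        simp only [ite_mul, one_mul, zero_mul, Finset.sum_ite_eq, Finset.mem_univ, if_true]
        exact core_apply (hC jk) (by intro hcon; rcases hcon.1 with h | h <;> omega)
      · -- column q of C jk is e_q
        have hcol : ∀ m : Fin (n+1), pprod C k p m * C jk m q
            = pprod C k p m * (if m = q then 1 else 0) := by
          intro m
          rw [core_apply (hC jk) (by intro hcon; rcases hcon.2 with h | h <;> omega)]
        rw [Finset.sum_congr rfl (fun m _ => hcol m)]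
        simp only [mul_ite, mul_one, mul_zero, Finset.sum_ite_eq', Finset.mem_univ, if_true]
        exact ih2 p q (Or.inr (by omega))
    · -- subdiagonal entries
      intro j hj
      have hsv : ((j.succ : Fin (n+1)) : ℕ) = (j:ℕ)+1 := rfl
      have hcv : ((j.castSucc : Fin (n+1)) : ℕ) = (j:ℕ) := rfl
      rw [hstep, Matrix.mul_apply]
      by_cases hjlt : (j:ℕ) < k
      · -- column j of C jk is e_j
        have hcol : ∀ m : Fin (n+1), pprod C k j.succ m * C jk m j.castSucc
            = pprod C k j.succ m * (if m = j.castSucc then 1 else 0) := by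
          intro m
          rw [core_apply (hC jk) (by intro hcon; rcases hcon.2 with h | h <;> omega)]
        rw [Finset.sum_congr rfl (fun m _ => hcol m)]
        simp only [mul_ite, mul_one, mul_zero, Finset.sum_ite_eq', Finset.mem_univ, if_true]
        exact ih3 j hjlt
      · -- j = jk (as (j:ℕ) = k)
        have hjv : (j:ℕ) = k := by omega
        have hjeq : jk = j := by
          apply Fin.ext
          omega
        rw [show C jk = C j from by rw [hjeq]]
        rw [Finset.sum_eq_single j.succ]
        · have h1 : pprod C k j.succ j.succ = 1 := by
            rw [ih2 j.succ j.succ (Or.inl (by omega))]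
            simp
          rw [h1, one_mul]
        · intro m _ hm
          by_cases hmv : (m:ℕ) = (j:ℕ)
          · have h0 : pprod C k j.succ m = 0 := by
              rw [ih2 j.succ m (Or.inl (by omega))]
              exact if_neg (by intro h; subst h; omega)
            rw [h0, zero_mul]
          · have hmv2 : (m:ℕ) ≠ (j:ℕ)+1 := by
              intro h
              exact hm (Fin.ext (by omega))
            have h0 : C j m j.castSucc = 0 := by
              rw [core_apply (hC j) (by intro hcon; rcases hcon.1 with h | h <;> omega)]
              exact if_neg (by intro h; subst h; omega)
            rw [h0, mul_zero]
        · intro h; exact absurd (Finset.mem_univ _) h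

lemma seqProd_hessenberg (C : Fin n → Matrix (Fin (n+1)) (Fin (n+1)) ℂ)
    (hC : ∀ j, IsCore j (C j)) :
    ∀ p q : Fin (n+1), (q:ℕ)+1 < p → seqProd C p q = 0 := by
  intro p q h
  rw [← pprod_n C]
  exact (pprod_inv C hC n le_rfl).1 p q h

lemma seqProd_subdiag (C : Fin n → Matrix (Fin (n+1)) (Fin (n+1)) ℂ)
    (hC : ∀ j, IsCore j (C j)) (j : Fin n) :
    seqProd C j.succ j.castSucc = C j j.succ j.castSucc := by
  rw [← pprod_n C]
  exact (pprod_inv C hC n le_rfl).2.2 j j.isLt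

lemma seqProd_unitary (C : Fin n → Matrix (Fin (n+1)) (Fin (n+1)) ℂ)
    (hC : ∀ j, IsCore j (C j)) :
    seqProd C ∈ Matrix.unitaryGroup (Fin (n+1)) ℂ := by
  unfold seqProd
  apply Submonoid.list_prod_mem
  intro x hx
  obtain ⟨j, _, rfl⟩ := List.mem_map.mp hx
  exact (hC j).1

end RtriHelper

/-- If all `C j` are nontrivial core transformations and the last row of
`C^*(B + e₁ yᵀ)` vanishes, then the leading principal `n × n` submatrix `R` of
`C^*(B + e₁ yᵀ)` is upper triangular, and `R ℓ ℓ = 0` iff `B ℓ` is trivial. -/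
theorem rtriangular (n : ℕ) (hn : 1 ≤ n)
    (C B : Fin n → Matrix (Fin (n + 1)) (Fin (n + 1)) ℂ)
    (hC : ∀ j, IsCore j (C j)) (hB : ∀ j, IsCore j (B j))
    (hCnontrivial : ∀ j, (C j) j.succ j.castSucc ≠ 0)
    (y : Fin (n + 1) → ℂ)
    (hrow : ∀ q,
      ((seqProd C)ᴴ * (seqProd B + vecMulVec (Pi.single (0 : Fin (n + 1)) (1 : ℂ)) y)) (Fin.last n) q = 0) :
    (∀ p q : Fin n, q < p →
        ((seqProd C)ᴴ * (seqProd B + vecMulVec (Pi.single (0 : Fin (n + 1)) (1 : ℂ)) y)) p.castSucc q.castSucc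
          = 0) ∧
    (∀ l : Fin n,
        ((seqProd C)ᴴ * (seqProd B + vecMulVec (Pi.single (0 : Fin (n + 1)) (1 : ℂ)) y)) l.castSucc l.castSucc
            = 0 ↔
          (B l) l.succ l.castSucc = 0) := by

  classical
  set Cp := seqProd C with hCp
  set M := seqProd B + vecMulVec (Pi.single (0 : Fin (n + 1)) (1 : ℂ)) y with hMdef
  set A := Cpᴴ * M with hA
  -- basic facts
  have hChess := RtriHelper.seqProd_hessenberg C hC
  have hCsub := RtriHelper.seqProd_subdiag C hC
  have hBhess := RtriHelper.seqProd_hessenberg B hB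
  have hBsub := RtriHelper.seqProd_subdiag B hB
  have hMhess : ∀ p q : Fin (n+1), (q:ℕ)+1 < p → M p q = 0 := by
    intro p q h
    have h0 : p ≠ 0 := by
      intro hp0; rw [hp0] at h; simp at h
    simp only [hMdef, Matrix.add_apply, Matrix.vecMulVec_apply]
    rw [hBhess p q h, Pi.single_eq_of_ne h0]
    simp
  have hMsub : ∀ j : Fin n, M j.succ j.castSucc = B j j.succ j.castSucc := by
    intro j
    simp only [hMdef, Matrix.add_apply, Matrix.vecMulVec_apply]
    rw [hBsub j, Pi.single_eq_of_ne (Fin.succ_ne_zero j)]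
    simp
  -- C * A = M
  have hCU : Cp * Cpᴴ = 1 := by
    have := (Matrix.mem_unitaryGroup_iff.mp (RtriHelper.seqProd_unitary C hC))
    rwa [Matrix.star_eq_conjTranspose] at this
  have hkey : ∀ p q : Fin (n+1), M p q = ∑ m, Cp p m * A m q := by
    intro p q
    have : Cp * A = M := by
      rw [hA, ← mul_assoc, hCU, one_mul]
    conv_lhs => rw [← this]
    rw [Matrix.mul_apply]
  -- lower triangle of A vanishes, by downward induction on rows
  have lower : ∀ t : ℕ, ∀ p q : Fin (n+1), n - (p:ℕ) ≤ t → (q:ℕ) < (p:ℕ) → A p q = 0 := by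
    intro t
    induction t with
    | zero =>
      intro p q hpt _
      have hp : p = Fin.last n := Fin.ext (by simp [Fin.val_last]; omega)
      rw [hp]
      exact hrow q
    | succ t ih =>
      intro p q hpt hqp
      by_cases hp : (p:ℕ) = n
      · have hp' : p = Fin.last n := Fin.ext (by simpa [Fin.val_last])
        rw [hp']
        exact hrow q
      · have hpn : (p:ℕ) < n := lt_of_le_of_ne (by omega) hp
        set j : Fin n := ⟨(p:ℕ), hpn⟩ with hj
        have hsv : ((j.succ : Fin (n+1)) : ℕ) = (p:ℕ)+1 := rfl
        have hcv : ((j.castSucc : Fin (n+1)) : ℕ) = (p:ℕ) := rfl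
        have hcastp : j.castSucc = p := Fin.ext hcv
        have hsum : ∑ m, Cp j.succ m * A m q = Cp j.succ j.castSucc * A j.castSucc q := by
          apply Finset.sum_eq_single j.castSucc
          · intro m _ hm
            by_cases hmlt : (m:ℕ) < (p:ℕ)
            · rw [hCp, hChess j.succ m (by omega), zero_mul]
            · have hmgt : (p:ℕ) < (m:ℕ) := by
                rcases lt_or_eq_of_le (not_lt.mp hmlt) with h | h
                · exact h
                · exact absurd (Fin.ext h.symm : m = j.castSucc) hm
              rw [ih m q (by omega) (by omega), mul_zero]
          · intro h; exact absurd (Finset.mem_univ _) h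
        have hM0 : M j.succ q = 0 := hMhess j.succ q (by omega)
        rw [hkey j.succ q, hsum] at hM0
        have hCne : Cp j.succ j.castSucc ≠ 0 := by
          rw [hCp, hCsub j]; exact hCnontrivial j
        have := (mul_eq_zero.mp hM0).resolve_left hCne
        rwa [hcastp] at this
  constructor
  · intro p q hqp
    exact lower n p.castSucc q.castSucc (by omega) (by
      simp only [Fin.coe_castSucc]
      exact hqp)
  · intro l
    have hsv : ((l.succ : Fin (n+1)) : ℕ) = (l:ℕ)+1 := rfl
    have hcv : ((l.castSucc : Fin (n+1)) : ℕ) = (l:ℕ) := rfl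
    have hsum : ∑ m, Cp l.succ m * A m l.castSucc
        = Cp l.succ l.castSucc * A l.castSucc l.castSucc := by
      apply Finset.sum_eq_single l.castSucc
      · intro m _ hm
        by_cases hmlt : (m:ℕ) < (l:ℕ)
        · rw [hCp, hChess l.succ m (by omega), zero_mul]
        · have hmgt : (l:ℕ) < (m:ℕ) := by
            rcases lt_or_eq_of_le (not_lt.mp hmlt) with h | h
            · exact h
            · exact absurd (Fin.ext h.symm : m = l.castSucc) hm
          rw [lower n m l.castSucc (by omega) (by omega), mul_zero]
      · intro h; exact absurd (Finset.mem_univ _) h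
    have hM : B l l.succ l.castSucc = Cp l.succ l.castSucc * A l.castSucc l.castSucc := by
      rw [← hsum, ← hkey l.succ l.castSucc, hMsub l]
    have hCne : Cp l.succ l.castSucc ≠ 0 := by
      rw [hCp, hCsub l]; exact hCnontrivial l
    constructor
    · intro h0
      rw [hM, h0, mul_zero]
    · intro h0
      rw [h0] at hM
      exact (mul_eq_zero.mp hM.symm).resolve_left hCne
end
end

section
/- Let m ≥ 2 and let C_1, …, C_{m−1} be core transformations in ℂ^{m×m}, where C_j has active part at position j. Then the descending product C = C_1 C_2 ⋯ C_{m−1} is upper Hessenberg (C_{ij} = 0 whenever i > j+1), its subdiagonal entries satisfy C_{j+1,j} = (C_j)_{j+1,j} for every j = 1,…,m−1, and consequently C is properly upper Hessenberg (all subdiagonal entries nonzero) if and only if every C_j is nontrivial. -/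
open Matrix

noncomputable section

/-! Right multiplication of `C 0 * ⋯ * C (k - 1)` by a core transformation at position `k`
changes only columns `k` and `k + 1`, while the rows of index `> k` of that partial product are
rows of the identity, so the new entries below the diagonal are copied from `C k`. By
induction the product stays upper Hessenberg and the subdiagonal entry in column `j` is the
one of `C j`. -/

section

variable {ι R : Type*} [Fintype ι] [DecidableEq ι] [Semiring R]

theorem Matrix.mul_apply_of_col_eq_one (M : Matrix ι ι R) {U : Matrix ι ι R} {p q : ι}
    (hU : ∀ r, U r q = (1 : Matrix ι ι R) r q) : (M * U) p q = M p q := by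
  calc (M * U) p q = (M * (1 : Matrix ι ι R)) p q := by simp only [mul_apply, hU]
    _ = M p q := by rw [mul_one]

theorem Matrix.mul_apply_of_row_eq_one {M : Matrix ι ι R} (U : Matrix ι ι R) {p q : ι}
    (hM : ∀ r, M p r = (1 : Matrix ι ι R) p r) : (M * U) p q = U p q := by
  calc (M * U) p q = ((1 : Matrix ι ι R) * U) p q := by simp only [mul_apply, hM]
    _ = U p q := by rw [one_mul]

end

def EqOneOffBlock {R : Type*} [Zero R] [One R] {n : ℕ} (j : Fin n)
    (U : Matrix (Fin (n + 1)) (Fin (n + 1)) R) : Prop :=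
  ∀ p q : Fin (n + 1),
    ¬((p = j.castSucc ∨ p = j.succ) ∧ (q = j.castSucc ∨ q = j.succ)) →
      U p q = (1 : Matrix (Fin (n + 1)) (Fin (n + 1)) R) p q

theorem IsCore.eqOneOffBlock {n : ℕ} {j : Fin n} {U : Matrix (Fin (n + 1)) (Fin (n + 1)) ℂ}
    (hU : IsCore j U) : EqOneOffBlock j U := fun p q h => by
  rw [hU.2 p q h, one_apply]

namespace EqOneOffBlock

variable {R : Type*} [Zero R] [One R] {n : ℕ} {j : Fin n}
  {U : Matrix (Fin (n + 1)) (Fin (n + 1)) R}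

theorem apply_of_row (hU : EqOneOffBlock j U) {p : Fin (n + 1)} (hp : (p : ℕ) ≠ j)
    (hp' : (p : ℕ) ≠ j + 1) (q : Fin (n + 1)) : U p q = (1 : Matrix _ _ R) p q :=
  hU p q fun ⟨h, _⟩ => h.elim (fun e => hp (by simp [e])) (fun e => hp' (by simp [e]))

theorem apply_of_col (hU : EqOneOffBlock j U) {q : Fin (n + 1)} (hq : (q : ℕ) ≠ j)
    (hq' : (q : ℕ) ≠ j + 1) (p : Fin (n + 1)) : U p q = (1 : Matrix _ _ R) p q :=
  hU p q fun ⟨_, h⟩ => h.elim (fun e => hq (by simp [e])) (fun e => hq' (by simp [e]))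

end EqOneOffBlock

section partialProd

variable {R : Type*} [Semiring R] {n : ℕ} (C : Fin n → Matrix (Fin (n + 1)) (Fin (n + 1)) R)

def partialProd (k : ℕ) : Matrix (Fin (n + 1)) (Fin (n + 1)) R :=
  (((List.finRange n).take k).map C).prod

theorem partialProd_succ {k : ℕ} (hk : k < n) :
    partialProd C (k + 1) = partialProd C k * C ⟨k, hk⟩ := by
  have hk' : k < (List.finRange n).length := by simpa using hk
  simp [partialProd, List.take_add_one, List.getElem?_eq_getElem hk']

theorem partialProd_of_le {k : ℕ} (hk : n ≤ k) :
    partialProd C k = ((List.finRange n).map C).prod := by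
  rw [partialProd, List.take_of_length_le (by simpa using hk)]

variable {C} (hC : ∀ j, EqOneOffBlock j (C j))
include hC

theorem partialProd_apply_of_lt {k : ℕ} (hk : k ≤ n) {p : Fin (n + 1)} (hp : k < (p : ℕ))
    (q : Fin (n + 1)) : partialProd C k p q = (1 : Matrix _ _ R) p q := by
  induction k generalizing q with
  | zero => rfl
  | succ k ih =>
    rw [partialProd_succ C hk, mul_apply_of_row_eq_one _ (ih (by omega) (by omega))]
    exact (hC _).apply_of_row (by simp; omega) (by simp; omega) q

theorem partialProd_apply_eq_zero {k : ℕ} (hk : k ≤ n) {p q : Fin (n + 1)}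
    (hpq : (q : ℕ) + 1 < p) : partialProd C k p q = 0 := by
  induction k with
  | zero => exact one_apply_ne fun h => by simp [h] at hpq
  | succ k ih =>
    rw [partialProd_succ C hk]
    by_cases hq : (q : ℕ) ≠ k ∧ (q : ℕ) ≠ k + 1
    · rw [mul_apply_of_col_eq_one _ ((hC _).apply_of_col hq.1 hq.2)]
      exact ih (by omega)
    · rw [mul_apply_of_row_eq_one _ (partialProd_apply_of_lt hC (by omega) (by omega)),
        (hC _).apply_of_row (by simp; omega) (by simp; omega)]
      exact one_apply_ne fun h => by simp [h] at hpq

theorem partialProd_apply_succ_castSucc {k : ℕ} (hk : k ≤ n) {j : Fin n} (hj : (j : ℕ) < k) :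
    partialProd C k j.succ j.castSucc = C j j.succ j.castSucc := by
  induction k with
  | zero => omega
  | succ k ih =>
    rw [partialProd_succ C hk]
    rcases (Nat.lt_succ_iff_lt_or_eq.mp hj) with hjk | rfl
    · rw [mul_apply_of_col_eq_one _ ((hC _).apply_of_col (by simp; omega) (by simp; omega))]
      exact ih (by omega) hjk
    · rw [mul_apply_of_row_eq_one _ (partialProd_apply_of_lt hC (by omega) (by simp))]

end partialProd

theorem descending_sequence_hessenberg_general (n : ℕ)
    (C : Fin n → Matrix (Fin (n + 1)) (Fin (n + 1)) ℂ)
    (hC : ∀ j, IsCore j (C j)) :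
    (∀ p q : Fin (n + 1), (q : ℕ) + 1 < (p : ℕ) → seqProd C p q = 0) ∧
    (∀ j : Fin n, seqProd C j.succ j.castSucc = (C j) j.succ j.castSucc) ∧
    ((∀ j : Fin n, seqProd C j.succ j.castSucc ≠ 0) ↔
      (∀ j : Fin n, (C j) j.succ j.castSucc ≠ 0)) := by
  have hblock j := (hC j).eqOneOffBlock
  have hprod : seqProd C = partialProd C n := (partialProd_of_le C le_rfl).symm
  have hsub (j : Fin n) : seqProd C j.succ j.castSucc = C j j.succ j.castSucc := by
    rw [hprod]
    exact partialProd_apply_succ_castSucc hblock le_rfl j.isLt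
  refine ⟨fun p q hpq => ?_, hsub, forall_congr' fun j => by rw [hsub j]⟩
  rw [hprod]
  exact partialProd_apply_eq_zero hblock le_rfl hpq

/-- A descending product of core transformations (at positions `1, …, m−1` of an
`m × m` matrix, `m = n+1 ≥ 2`) is upper Hessenberg, its subdiagonal entries equal those
of the corresponding factors, and it is properly upper Hessenberg iff every factor is
nontrivial. -/
theorem descending_sequence_hessenberg (n : ℕ) (hn : 1 ≤ n)
    (C : Fin n → Matrix (Fin (n + 1)) (Fin (n + 1)) ℂ)
    (hC : ∀ j, IsCore j (C j)) :
    (∀ p q : Fin (n + 1), (q : ℕ) + 1 < (p : ℕ) → seqProd C p q = 0) ∧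
    (∀ j : Fin n, seqProd C j.succ j.castSucc = (C j) j.succ j.castSucc) ∧
    ((∀ j : Fin n, seqProd C j.succ j.castSucc ≠ 0) ↔
      (∀ j : Fin n, (C j) j.succ j.castSucc ≠ 0)) :=
  descending_sequence_hessenberg_general n C hC
end
end

section
/- Let n ≥ k ≥ 1 and for j = 1,…,k set ℓ_j = n − j + 1. For each j let α_j ∈ ℂ, let x_j ∈ ℂ^n satisfy x_j(i) = 0 for every i > ℓ_j, set y_j = α_j e_{ℓ_j}, and define R_j = I_n + (x_j − e_{ℓ_j}) y_j^T. Then for every j ∈ {1,…,k}: R_1 R_2 ⋯ R_{j−1} x_j = x_j and y_j^T R_{j+1} ⋯ R_k = y_j^T (with empty products interpreted as the identity). -/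
/-!
A rank-one update `I + u vᵀ` fixes every `w` with `vᵀ w = 0` and, on the left, every `wᵀ`
with `wᵀ u = 0`. For `t < j` the support condition on `x_j` kills its entry at the spike
`ℓ_t = n − t + 1` of `y_t`; for `j < t` it kills the entry of `x_t` at `ℓ_j`, and `e_{ℓ_t}`
vanishes there since `ℓ_t ≠ ℓ_j`.
-/

open Matrix

noncomputable section

/-- The factor `R_j = I + (x_j − e_ℓ) y_jᵀ` of the Gaussian factorization, with
`y_j = α_j e_ℓ` and spike column `ℓ = n − j` (1-based `ℓ = n − j + 1`; here `t` is the
0-based index of the factor, so the spike column is `n − 1 − t`, 0-based). -/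
def gaussFactor (n k : ℕ) (hn : 0 < n) (α : Fin k → ℂ) (x : Fin k → Fin n → ℂ)
    (t : Fin k) : Matrix (Fin n) (Fin n) ℂ :=
  1 + vecMulVec (x t - (Pi.single (⟨n - 1 - (t : ℕ), by omega⟩ : Fin n) 1 : Fin n → ℂ))
      (α t • (Pi.single (⟨n - 1 - (t : ℕ), by omega⟩ : Fin n) 1 : Fin n → ℂ))

theorem List.lt_of_mem_take_finRange {k m : ℕ} {t : Fin k}
    (h : t ∈ (List.finRange k).take m) : (t : ℕ) < m := by
  obtain ⟨i, hi, rfl⟩ := List.mem_iff_getElem.mp h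
  simp only [List.length_take, List.length_finRange, lt_inf_iff] at hi
  simp [hi.1]

theorem List.le_of_mem_drop_finRange {k m : ℕ} {t : Fin k}
    (h : t ∈ (List.finRange k).drop m) : m ≤ t := by
  obtain ⟨i, hi, rfl⟩ := List.mem_iff_getElem.mp h
  simp

namespace Matrix

variable {ι R : Type*} [Fintype ι] [DecidableEq ι] [Semiring R]

theorem list_prod_mulVec_eq_self {L : List (Matrix ι ι R)} {v : ι → R}
    (h : ∀ M ∈ L, M *ᵥ v = v) : L.prod *ᵥ v = v := by
  induction L with
  | nil => exact one_mulVec v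
  | cons M L ih =>
    rw [List.prod_cons, ← mulVec_mulVec, ih fun N hN ↦ h N (List.mem_cons_of_mem M hN),
      h M List.mem_cons_self]

theorem vecMul_list_prod_eq_self {L : List (Matrix ι ι R)} {v : ι → R}
    (h : ∀ M ∈ L, v ᵥ* M = v) : v ᵥ* L.prod = v := by
  induction L with
  | nil => exact vecMul_one v
  | cons M L ih =>
    rw [List.prod_cons, ← vecMul_vecMul, h M List.mem_cons_self,
      ih fun N hN ↦ h N (List.mem_cons_of_mem M hN)]

theorem one_add_vecMulVec_mulVec_of_dotProduct_eq_zero {u v w : ι → R} (h : v ⬝ᵥ w = 0) :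
    (1 + vecMulVec u v) *ᵥ w = w := by
  rw [add_mulVec, one_mulVec, vecMulVec_mulVec, h, MulOpposite.op_zero, zero_smul, add_zero]

theorem vecMul_one_add_vecMulVec_of_dotProduct_eq_zero {u v w : ι → R} (h : w ⬝ᵥ u = 0) :
    w ᵥ* (1 + vecMulVec u v) = w := by
  rw [vecMul_add, vecMul_one, vecMul_vecMulVec, h, zero_smul, add_zero]

end Matrix

section gaussFactor

variable {n k : ℕ} (hn : 0 < n) (hkn : k ≤ n) (α : Fin k → ℂ) {x : Fin k → Fin n → ℂ}
  (hx : ∀ (j : Fin k) (i : Fin n), n ≤ (i : ℕ) + (j : ℕ) → x j i = 0)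
include hkn hx

theorem gaussFactor_mulVec_of_lt {t j : Fin k} (htj : t < j) :
    gaussFactor n k hn α x t *ᵥ x j = x j := by
  refine one_add_vecMulVec_mulVec_of_dotProduct_eq_zero ?_
  rw [smul_dotProduct, single_dotProduct, hx j _ (by dsimp only; omega), mul_zero, smul_zero]

theorem vecMul_gaussFactor_of_lt {j t : Fin k} (hjt : j < t) :
    (α j • (Pi.single (⟨n - 1 - (j : ℕ), by omega⟩ : Fin n) 1 : Fin n → ℂ)) ᵥ*
      gaussFactor n k hn α x t
      = α j • (Pi.single (⟨n - 1 - (j : ℕ), by omega⟩ : Fin n) 1 : Fin n → ℂ) := by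
  refine vecMul_one_add_vecMulVec_of_dotProduct_eq_zero ?_
  have hne : (⟨n - 1 - (j : ℕ), by omega⟩ : Fin n) ≠ ⟨n - 1 - (t : ℕ), by omega⟩ := by
    simp only [ne_eq, Fin.mk.injEq]
    omega
  rw [smul_dotProduct, single_dotProduct, Pi.sub_apply, hx t _ (by dsimp only; omega),
    Pi.single_eq_of_ne hne, sub_zero, mul_zero, smul_zero]

end gaussFactor

/-- For the Gaussian factorization: `R₁ ⋯ R_{j−1} x_j = x_j` and
`y_jᵀ R_{j+1} ⋯ R_k = y_jᵀ`. -/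
theorem gauss_factors_fixed_vectors (n k : ℕ) (hk : 1 ≤ k) (hkn : k ≤ n)
    (α : Fin k → ℂ) (x : Fin k → Fin n → ℂ)
    (hx : ∀ (j : Fin k) (i : Fin n), n ≤ (i : ℕ) + (j : ℕ) → x j i = 0) :
    ∀ j : Fin k,
      ((((List.finRange k).take (j : ℕ)).map
          (gaussFactor n k (by omega) α x)).prod).mulVec (x j) = x j ∧
      Matrix.vecMul (α j • (Pi.single (⟨n - 1 - (j : ℕ), by omega⟩ : Fin n) 1 : Fin n → ℂ))
          ((((List.finRange k).drop ((j : ℕ) + 1)).map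
            (gaussFactor n k (by omega) α x)).prod)
        = α j • (Pi.single (⟨n - 1 - (j : ℕ), by omega⟩ : Fin n) 1 : Fin n → ℂ) := by
  intro j
  constructor
  · exact list_prod_mulVec_eq_self <| List.forall_mem_map.mpr fun t ht ↦
      gaussFactor_mulVec_of_lt _ hkn α hx (List.lt_of_mem_take_finRange ht)
  · exact vecMul_list_prod_eq_self <| List.forall_mem_map.mpr fun t ht ↦
      vecMul_gaussFactor_of_lt _ hkn α hx (List.le_of_mem_drop_finRange ht)
end
end

section
/- (Turnover.) Let F_1, G_2, H_1 ∈ ℂ^{3×3} be core transformations, where F_1 and H_1 have active part at position 1 and G_2 has active part at position 2. Then there exist core transformations F̃_2, G̃_1, H̃_2 ∈ ℂ^{3×3}, with F̃_2 and H̃_2 having active part at position 2 and G̃_1 having active part at position 1, such that F_1 G_2 H_1 = F̃_2 G̃_1 H̃_2. Moreover, every unitary matrix U ∈ ℂ^{3×3} can be written both in the form F_1 G_2 H_1 and in the form F̃_2 G̃_1 H̃_2 with core transformations of the indicated active positions. -/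
open Matrix

/-! Gaussian elimination by Givens rotations: for a unitary `U`, a rotation in rows 1, 2 kills
`U 2 0`, and a rotation in rows 0, 1 then turns the first column into `e₀`. A unitary `N` with
`N 0 0 = 1` is active only in rows and columns 1, 2, so `U` has the shape `F̃₂ G̃₁ H̃₂`.
Conjugation by the index reversal `i ↦ 2 - i` exchanges the two active positions, which gives the
shape `F₁ G₂ H₁`. The turnover itself is the factorization of the unitary `F₁ G₂ H₁` in the shape
`F̃₂ G̃₁ H̃₂`. -/

lemma Complex.eq_zero_of_sum_normSq_eq_one {n : Type*} [Fintype n] [DecidableEq n] {v : n → ℂ}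
    (hv : ∑ k, normSq (v k) = 1) {i j : n} (hi : v i = 1) (hji : j ≠ i) : v j = 0 := by
  have hsplit := Finset.add_sum_erase Finset.univ (fun k => normSq (v k)) (Finset.mem_univ i)
  rw [hv, hi, map_one, add_eq_left,
    Finset.sum_eq_zero_iff_of_nonneg fun k _ => normSq_nonneg _] at hsplit
  exact normSq_eq_zero.mp (hsplit j (Finset.mem_erase.mpr ⟨hji, Finset.mem_univ j⟩))

namespace Matrix

variable {m n : Type*} [Fintype m] [DecidableEq m] [Fintype n] [DecidableEq n]

lemma sum_normSq_col_eq_one {U : Matrix n n ℂ} (hU : U ∈ unitaryGroup n ℂ) (i : n) :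
    ∑ k, Complex.normSq (U k i) = 1 := by
  have hii := congrFun (congrFun (mem_unitaryGroup_iff'.mp hU) i) i
  rw [mul_apply, one_apply_eq] at hii
  have hc : ((∑ k, Complex.normSq (U k i) : ℝ) : ℂ) = 1 := by
    push_cast
    simpa [Complex.normSq_eq_conj_mul_self] using hii
  exact_mod_cast hc

lemma sum_normSq_row_eq_one {U : Matrix n n ℂ} (hU : U ∈ unitaryGroup n ℂ) (i : n) :
    ∑ k, Complex.normSq (U i k) = 1 := by
  simpa using sum_normSq_col_eq_one (Unitary.star_mem hU) i

lemma submatrix_mem_unitaryGroup {U : Matrix n n ℂ} (hU : U ∈ unitaryGroup n ℂ) (e : m ≃ n) :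
    U.submatrix e e ∈ unitaryGroup m ℂ := by
  rw [mem_unitaryGroup_iff] at hU ⊢
  rw [star_eq_conjTranspose, conjTranspose_submatrix, submatrix_mul_equiv,
    ← star_eq_conjTranspose, hU, submatrix_one_equiv]

end Matrix

lemma IsCore.star {n : ℕ} {j : Fin n} {U : Matrix (Fin (n + 1)) (Fin (n + 1)) ℂ}
    (h : IsCore j U) : IsCore j (star U) := by
  refine ⟨Unitary.star_mem h.1, fun p q hpq => ?_⟩
  rw [star_apply, h.2 q p (by tauto)]
  simp [eq_comm]

lemma IsCore.submatrix_rev {n : ℕ} {j : Fin n} {U : Matrix (Fin (n + 1)) (Fin (n + 1)) ℂ}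
    (h : IsCore j U) : IsCore j.rev (U.submatrix Fin.revPerm Fin.revPerm) := by
  refine ⟨submatrix_mem_unitaryGroup h.1 Fin.revPerm, fun p q hpq => ?_⟩
  rw [submatrix_apply, h.2 _ _ ?_]
  · simp
  · simpa [Fin.rev_eq_iff, Fin.rev_castSucc, Fin.rev_succ, or_comm] using hpq

open Complex ComplexConjugate in
lemma exists_mem_unitaryGroup_mulVec_eq (a b : ℂ) :
    ∃ W ∈ unitaryGroup (Fin 2) ℂ, W *ᵥ ![a, b] = ![(√(normSq a + normSq b) : ℂ), 0] := by
  have hnn : 0 ≤ normSq a + normSq b := add_nonneg (normSq_nonneg a) (normSq_nonneg b)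
  set r := √(normSq a + normSq b)
  rcases eq_or_ne r 0 with hr | hr
  · have hab : a = 0 ∧ b = 0 := by
      rw [Real.sqrt_eq_zero hnn, add_eq_zero_iff_of_nonneg (normSq_nonneg _)
        (normSq_nonneg _)] at hr
      exact ⟨normSq_eq_zero.mp hr.1, normSq_eq_zero.mp hr.2⟩
    exact ⟨1, one_mem _, by simp [hab, hr]⟩
  · have hr2 : a * conj a + b * conj b = (r : ℂ) ^ 2 := by
      rw [← ofReal_pow, Real.sq_sqrt hnn]
      push_cast [mul_conj]
      ring
    have hrC : (r : ℂ) ≠ 0 := ofReal_ne_zero.mpr hr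
    refine ⟨!![conj a / r, conj b / r; -b / r, a / r], ?_, ?_⟩
    · rw [mem_unitaryGroup_iff]
      ext i j
      fin_cases i <;> fin_cases j <;> simp [mul_apply, Fin.sum_univ_two, star_apply] <;>
        field_simp <;> first | linear_combination hr2 | ring
    · ext i
      fin_cases i <;> simp [mulVec, dotProduct, Fin.sum_univ_two] <;> field_simp <;>
        first | linear_combination hr2 | ring

def embed01 : Matrix (Fin 2) (Fin 2) ℂ →⋆* Matrix (Fin 3) (Fin 3) ℂ where
  toFun W := !![W 0 0, W 0 1, 0; W 1 0, W 1 1, 0; 0, 0, 1]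
  map_one' := by ext i j; fin_cases i <;> fin_cases j <;> rfl
  map_mul' A B := by ext i j; fin_cases i <;> fin_cases j <;> simp [mul_apply, Fin.sum_univ_succ]
  map_star' W := by ext i j; fin_cases i <;> fin_cases j <;> simp [star_apply]

def embed12 : Matrix (Fin 2) (Fin 2) ℂ →⋆* Matrix (Fin 3) (Fin 3) ℂ where
  toFun W := !![1, 0, 0; 0, W 0 0, W 0 1; 0, W 1 0, W 1 1]
  map_one' := by ext i j; fin_cases i <;> fin_cases j <;> rfl
  map_mul' A B := by ext i j; fin_cases i <;> fin_cases j <;> simp [mul_apply, Fin.sum_univ_succ]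
  map_star' W := by ext i j; fin_cases i <;> fin_cases j <;> simp [star_apply]

lemma isCore_embed01 {W : Matrix (Fin 2) (Fin 2) ℂ} (hW : W ∈ unitaryGroup (Fin 2) ℂ) :
    IsCore (0 : Fin 2) (embed01 W) := by
  refine ⟨Unitary.map_mem embed01 hW, fun p q hpq => ?_⟩
  fin_cases p <;> fin_cases q <;> simp_all [embed01, Fin.ext_iff]

lemma isCore_embed12 {W : Matrix (Fin 2) (Fin 2) ℂ} (hW : W ∈ unitaryGroup (Fin 2) ℂ) :
    IsCore (1 : Fin 2) (embed12 W) := by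
  refine ⟨Unitary.map_mem embed12 hW, fun p q hpq => ?_⟩
  fin_cases p <;> fin_cases q <;> simp_all [embed12, Fin.ext_iff]

lemma isCore_one_of_apply_zero_zero {N : Matrix (Fin 3) (Fin 3) ℂ}
    (hN : N ∈ unitaryGroup (Fin 3) ℂ) (h00 : N 0 0 = 1) : IsCore (1 : Fin 2) N := by
  have hrow : ∀ q, q ≠ 0 → N 0 q = 0 := fun q hq =>
    Complex.eq_zero_of_sum_normSq_eq_one (sum_normSq_row_eq_one hN 0) h00 hq
  have hcol : ∀ p, p ≠ 0 → N p 0 = 0 := fun p hp =>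
    Complex.eq_zero_of_sum_normSq_eq_one (sum_normSq_col_eq_one hN 0) h00 hp
  refine ⟨hN, fun p q hpq => ?_⟩
  fin_cases p <;> fin_cases q <;> simp_all

lemma exists_isCore_one_zero_one {U : Matrix (Fin 3) (Fin 3) ℂ}
    (hU : U ∈ unitaryGroup (Fin 3) ℂ) :
    ∃ F G H : Matrix (Fin 3) (Fin 3) ℂ,
      IsCore (1 : Fin 2) F ∧ IsCore (0 : Fin 2) G ∧ IsCore (1 : Fin 2) H ∧ U = F * G * H := by
  obtain ⟨K, hK, hKU⟩ := exists_mem_unitaryGroup_mulVec_eq (U 1 0) (U 2 0)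
  set s := √(Complex.normSq (U 1 0) + Complex.normSq (U 2 0))
  obtain ⟨L, hL, hLU⟩ := exists_mem_unitaryGroup_mulVec_eq (U 0 0) s
  have hnorm : √(Complex.normSq (U 0 0) + Complex.normSq (s : ℂ)) = 1 := by
    rw [Complex.normSq_ofReal,
      Real.mul_self_sqrt (add_nonneg (Complex.normSq_nonneg _) (Complex.normSq_nonneg _)),
      ← add_assoc, ← Fin.sum_univ_three (fun k => Complex.normSq (U k 0)),
      sum_normSq_col_eq_one hU, Real.sqrt_one]
  set N := embed01 L * (embed12 K * U) with hN
  have hNmem : N ∈ unitaryGroup (Fin 3) ℂ :=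
    mul_mem (Unitary.map_mem _ hL) (mul_mem (Unitary.map_mem _ hK) hU)
  have hN00 : N 0 0 = 1 := by
    have hK0 : K 0 0 * U 1 0 + K 0 1 * U 2 0 = s := by
      simpa [mulVec, dotProduct] using congrFun hKU 0
    have hL0 : L 0 0 * U 0 0 + L 0 1 * s = 1 := by
      have h := congrFun hLU 0
      rw [hnorm] at h
      simpa [mulVec, dotProduct] using h
    calc N 0 0 = L 0 0 * U 0 0 + L 0 1 * (K 0 0 * U 1 0 + K 0 1 * U 2 0) := by
          simp [hN, embed01, embed12, vecMul, dotProduct, Fin.sum_univ_three]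
      _ = 1 := by rw [hK0, hL0]
  refine ⟨star (embed12 K), star (embed01 L), N, (isCore_embed12 hK).star,
    (isCore_embed01 hL).star, isCore_one_of_apply_zero_zero hNmem hN00, ?_⟩
  rw [hN, ← mul_assoc, ← mul_assoc, mul_assoc (star _) (star _),
    Unitary.star_mul_self_of_mem (Unitary.map_mem _ hL), mul_one,
    Unitary.star_mul_self_of_mem (Unitary.map_mem _ hK), one_mul]

lemma exists_isCore_zero_one_zero {U : Matrix (Fin 3) (Fin 3) ℂ}
    (hU : U ∈ unitaryGroup (Fin 3) ℂ) :
    ∃ F G H : Matrix (Fin 3) (Fin 3) ℂ,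
      IsCore (0 : Fin 2) F ∧ IsCore (1 : Fin 2) G ∧ IsCore (0 : Fin 2) H ∧ U = F * G * H := by
  obtain ⟨F, G, H, hF, hG, hH, hFGH⟩ :=
    exists_isCore_one_zero_one (submatrix_mem_unitaryGroup hU Fin.revPerm)
  refine ⟨F.submatrix Fin.revPerm Fin.revPerm, G.submatrix Fin.revPerm Fin.revPerm,
    H.submatrix Fin.revPerm Fin.revPerm, hF.submatrix_rev, hG.submatrix_rev, hH.submatrix_rev, ?_⟩
  rw [submatrix_mul_equiv, submatrix_mul_equiv, ← hFGH, submatrix_submatrix]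
  ext i j
  simp

/-- **Turnover.**  A product `F₁ G₂ H₁` of core transformations (positions 1,2,1;
0-based 0,1,0) can be refactored as `F̃₂ G̃₁ H̃₂` (positions 2,1,2; 0-based 1,0,1);
moreover every 3×3 unitary matrix can be written in both shapes. -/
theorem turnover :
    (∀ F G H : Matrix (Fin 3) (Fin 3) ℂ,
      IsCore (0 : Fin 2) F → IsCore (1 : Fin 2) G → IsCore (0 : Fin 2) H →
        ∃ F' G' H' : Matrix (Fin 3) (Fin 3) ℂ,
          IsCore (1 : Fin 2) F' ∧ IsCore (0 : Fin 2) G' ∧ IsCore (1 : Fin 2) H' ∧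
            F * G * H = F' * G' * H') ∧
    (∀ U : Matrix (Fin 3) (Fin 3) ℂ, U ∈ Matrix.unitaryGroup (Fin 3) ℂ →
      (∃ F G H : Matrix (Fin 3) (Fin 3) ℂ,
        IsCore (0 : Fin 2) F ∧ IsCore (1 : Fin 2) G ∧ IsCore (0 : Fin 2) H ∧
          U = F * G * H) ∧
      (∃ F' G' H' : Matrix (Fin 3) (Fin 3) ℂ,
        IsCore (1 : Fin 2) F' ∧ IsCore (0 : Fin 2) G' ∧ IsCore (1 : Fin 2) H' ∧
          U = F' * G' * H')) :=
  ⟨fun _ _ _ hF hG hH => exists_isCore_one_zero_one (mul_mem (mul_mem hF.1 hG.1) hH.1),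
    fun _ hU => ⟨exists_isCore_zero_one_zero hU, exists_isCore_one_zero_one hU⟩⟩
end

section
/- Let d ≥ 1, k ≥ 1, n = dk, let M_0, …, M_{d−1}, N_1, …, N_d ∈ ℂ^{k×k}, let S ∈ ℂ^{n×n} be the associated block companion matrix built from M_0,…,M_{d−1}, and let T ∈ ℂ^{n×n} be the block upper triangular matrix built from N_1,…,N_d. Then there exists a sign σ ∈ {1, −1}, depending only on d and k, such that for every λ ∈ ℂ: det(λT − S) = σ · det( M_0 + Σ_{i=1}^{d−1} (M_i + N_i) λ^i + N_d λ^d ). In particular, λ is an eigenvalue of the pencil (S,T) if and only if it is an eigenvalue of the matrix polynomial with coefficients P_0 = M_0, P_i = M_i + N_i (1 ≤ i ≤ d−1), P_d = N_d. -/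
/-!
Write `λT − S` in `d × d` block form. Left multiplication by the unipotent block upper
triangular matrix `E` with blocks `E i j = λ ^ (j - i) • 1` (for `i ≤ j`) turns each block column
`λ e_j − e_{j+1}` into `−e_{j+1}` and the last block column `(λ N_{i+1} + M_i)_i` into the
Horner sums `Σ_{l ≥ i} λ ^ (l - i) • (λ N_{l+1} + M_l)`, whose top entry is the matrix
polynomial `P(λ)`. Moving the top block row to the bottom then leaves a block upper
triangular matrix with diagonal blocks `−1, …, −1, P(λ)`, so `det (λT − S) = ± det P(λ)`
with a sign depending only on `d` and `k`.
-/

open Matrix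

noncomputable section

/-- The `dk × dk` block upper triangular matrix built from `N 1, …, N d`. -/
def blockT (d k : ℕ) (hk : 0 < k) (N : ℕ → Matrix (Fin k) (Fin k) ℂ) :
    Matrix (Fin (d * k)) (Fin (d * k)) ℂ :=
  fun p q =>
    if (q : ℕ) < (d - 1) * k then (if p = q then 1 else 0)
    else N ((p : ℕ) / k + 1) ⟨(p : ℕ) % k, Nat.mod_lt _ hk⟩ ⟨(q : ℕ) % k, Nat.mod_lt _ hk⟩

namespace Matrix

variable {ι n R : Type*} [Fintype ι] [DecidableEq ι] [Fintype n] [DecidableEq n] [CommRing R]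

theorem det_toSquareBlock_comp_fst (M : Matrix ι ι (Matrix n n R)) (i : ι) :
    ((comp ι ι n n R M).toSquareBlock Prod.fst i).det = (M i i).det := by
  let e : n ≃ {x : ι × n // x.1 = i} :=
    { toFun a := ⟨(i, a), rfl⟩
      invFun x := x.1.2
      left_inv _ := rfl
      right_inv := by rintro ⟨⟨_, _⟩, rfl⟩; rfl }
  rw [← det_submatrix_equiv_self e]
  rfl

theorem BlockTriangular.det_comp [LinearOrder ι]
    {M : Matrix ι ι (Matrix n n R)} (h : M.BlockTriangular id) :
    (Matrix.comp ι ι n n R M).det = ∏ i, (M i i).det :=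
  h.comp.det_fintype.trans <| Finset.prod_congr rfl fun i _ => det_toSquareBlock_comp_fst M i

theorem det_comp_mul (A B : Matrix ι ι (Matrix n n R)) :
    (comp ι ι n n R (A * B)).det = (comp ι ι n n R A).det * (comp ι ι n n R B).det := by
  rw [← det_mul]; exact congrArg det ((compRingEquiv ι n R).map_mul A B)

theorem det_comp_submatrix_left (M : Matrix ι ι (Matrix n n R)) (σ : Equiv.Perm ι) :
    (comp ι ι n n R (M.submatrix σ id)).det =
      Equiv.Perm.sign (σ.prodCongr (Equiv.refl n)) * (comp ι ι n n R M).det :=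
  det_permute (σ.prodCongr (Equiv.refl n)) (comp ι ι n n R M)

end Matrix

theorem finRotate_castSucc {m : ℕ} (j : Fin m) : finRotate (m + 1) j.castSucc = j.succ :=
  finRotate_of_lt j.2

theorem sum_range_pow_smul_smul_add {R A : Type*} [CommSemiring R] [AddCommMonoid A]
    [Module R A] (lam : R) (f g : ℕ → A) (m : ℕ) :
    ∑ l ∈ Finset.range (m + 1), lam ^ l • (lam • g (l + 1) + f l) =
      f 0 + ∑ i ∈ Finset.Ico 1 (m + 1), lam ^ i • (f i + g i) + lam ^ (m + 1) • g (m + 1) := by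
  induction m with
  | zero => simp [add_comm]
  | succ m ih =>
    rw [Finset.sum_range_succ, ih, Finset.sum_Ico_succ_top (Nat.le_add_left 1 m),
      smul_add, smul_add, smul_smul, ← pow_succ]
    abel

section Pencil

variable {n R : Type*} [Fintype n] [DecidableEq n] [CommRing R] {m : ℕ}

def pencilBlocks (lam : R) (v : Fin (m + 1) → Matrix n n R) :
    Matrix (Fin (m + 1)) (Fin (m + 1)) (Matrix n n R) :=
  of fun i j => Fin.lastCases (v i)
    (fun j => (if i = j.castSucc then lam • 1 else 0) - if i = j.succ then 1 else 0) j

def hornerBlocks (m : ℕ) (lam : R) : Matrix (Fin (m + 1)) (Fin (m + 1)) (Matrix n n R) :=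
  of fun i j => if i ≤ j then lam ^ (j - i : ℕ) • 1 else 0

theorem hornerBlocks_mul_pencilBlocks_castSucc (lam : R) (v : Fin (m + 1) → Matrix n n R)
    (i : Fin (m + 1)) (j : Fin m) :
    (hornerBlocks m lam * pencilBlocks lam v : Matrix _ _ (Matrix n n R)) i j.castSucc =
      if i = j.succ then -1 else 0 := by
  simp only [mul_apply, pencilBlocks, of_apply, Fin.lastCases_castSucc, mul_sub, mul_ite,
    mul_zero, mul_one, Finset.sum_sub_distrib, Finset.sum_ite_eq', Finset.mem_univ, if_true]
  simp only [hornerBlocks, of_apply]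
  rcases lt_trichotomy i j.succ with hlt | rfl | hgt
  · have hle : i ≤ j.castSucc := Fin.le_castSucc_iff.mpr hlt
    rw [if_pos hle, if_pos hlt.le, if_neg hlt.ne, smul_mul_assoc, one_mul, smul_smul, ← pow_succ,
      Fin.val_succ, Fin.val_castSucc, Nat.sub_add_comm (show (i : ℕ) ≤ j from hle), sub_self]
  · simp [Fin.castSucc_lt_succ.not_ge]
  · have : ¬ i ≤ j.castSucc := fun h => (h.trans_lt (Fin.castSucc_lt_succ)).not_gt hgt
    rw [if_neg this, if_neg hgt.not_ge, if_neg hgt.ne', sub_zero, zero_mul]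

theorem hornerBlocks_mul_pencilBlocks_last (lam : R) (v : Fin (m + 1) → Matrix n n R)
    (i : Fin (m + 1)) :
    (hornerBlocks m lam * pencilBlocks lam v : Matrix _ _ (Matrix n n R)) i (Fin.last m) =
      ∑ l with i ≤ l, lam ^ (l - i : ℕ) • v l := by
  simp only [mul_apply, pencilBlocks, hornerBlocks, of_apply, Fin.lastCases_last, ite_mul,
    zero_mul, smul_mul_assoc, one_mul, Finset.sum_filter]

theorem blockTriangular_hornerBlocks_mul_pencilBlocks_rotate (lam : R)
    (v : Fin (m + 1) → Matrix n n R) :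
    ((hornerBlocks m lam * pencilBlocks lam v : Matrix _ _ (Matrix n n R)).submatrix
      (finRotate (m + 1)) id).BlockTriangular id := by
  intro i j hji
  obtain ⟨j, rfl⟩ := Fin.exists_castSucc_eq.mpr (hji.trans_le (Fin.le_last i)).ne
  rw [submatrix_apply, id, hornerBlocks_mul_pencilBlocks_castSucc, ← finRotate_castSucc]
  exact if_neg ((finRotate _).injective.ne hji.ne')

def linearizationSign (m : ℕ) (n : Type*) [Fintype n] [DecidableEq n] : ℤˣ :=
  Equiv.Perm.sign ((finRotate (m + 1)).prodCongr (Equiv.refl n)) * (-1) ^ (m * Fintype.card n)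

theorem det_comp_pencilBlocks (lam : R) (v : Fin (m + 1) → Matrix n n R) :
    (comp _ _ n n R (pencilBlocks lam v)).det =
      ((linearizationSign m n : ℤ) : R) * (∑ l : Fin (m + 1), lam ^ (l : ℕ) • v l).det := by
  set B : Matrix _ _ (Matrix n n R) := hornerBlocks m lam * pencilBlocks lam v
  have hE : (comp _ _ n n R (hornerBlocks m lam)).det = 1 := by
    rw [BlockTriangular.det_comp (M := hornerBlocks m lam) fun _ _ h => if_neg h.not_ge]
    simp [hornerBlocks]
  have hB : (comp _ _ n n R B).det = (comp _ _ n n R (pencilBlocks lam v)).det := by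
    rw [det_comp_mul, hE, one_mul]
  have hrot : (comp _ _ n n R (B.submatrix (finRotate (m + 1)) id)).det =
      (-1) ^ (m * Fintype.card n) * (∑ l : Fin (m + 1), lam ^ (l : ℕ) • v l).det := by
    rw [(blockTriangular_hornerBlocks_mul_pencilBlocks_rotate lam v).det_comp,
      Fin.prod_univ_castSucc]
    simp only [submatrix_apply, id, finRotate_castSucc, finRotate_last,
      hornerBlocks_mul_pencilBlocks_castSucc, hornerBlocks_mul_pencilBlocks_last, if_true]
    simp [det_neg, pow_mul']
  set ρ := (finRotate (m + 1)).prodCongr (Equiv.refl n)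
  calc (comp _ _ n n R (pencilBlocks lam v)).det
      = (comp _ _ n n R B).det := hB.symm
    _ = Equiv.Perm.sign ρ * (comp _ _ n n R (B.submatrix (finRotate (m + 1)) id)).det := by
      rw [det_comp_submatrix_left, ← mul_assoc, ← Int.cast_mul, ← Units.val_mul,
        Int.units_mul_self, Units.val_one, Int.cast_one, one_mul]
    _ = _ := by
      rw [hrot, linearizationSign]
      push_cast
      ring

end Pencil

theorem submatrix_finProdFinEquiv_pencil (m k : ℕ) (hk : 0 < k)
    (M N : ℕ → Matrix (Fin k) (Fin k) ℂ) (lam : ℂ) :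
    (lam • blockT (m + 1) k hk N - blockCompanion (m + 1) k hk M).submatrix
        finProdFinEquiv finProdFinEquiv =
      comp _ _ _ _ ℂ (pencilBlocks lam fun i => lam • N (i + 1) + M i) := by
  have hdiv (i : Fin (m + 1)) (a : Fin k) : (finProdFinEquiv (i, a) : ℕ) / k = i :=
    congrArg Fin.val (congrArg Prod.fst (finProdFinEquiv.symm_apply_apply (i, a)))
  have hmod (i : Fin (m + 1)) (a : Fin k) :
      (⟨(finProdFinEquiv (i, a) : ℕ) % k, Nat.mod_lt _ hk⟩ : Fin k) = a :=
    congrArg Prod.snd (finProdFinEquiv.symm_apply_apply (i, a))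
  ext ⟨i, a⟩ ⟨j, b⟩
  simp only [submatrix_apply, Matrix.sub_apply, Matrix.smul_apply, smul_eq_mul, blockT,
    blockCompanion, comp_apply, pencilBlocks, of_apply, hdiv, hmod]
  induction j using Fin.lastCases with
  | last =>
    have hcol : ¬ (finProdFinEquiv (Fin.last m, b) : ℕ) < (m + 1 - 1) * k := by
      simp only [finProdFinEquiv_apply_val, Fin.val_last, Nat.add_sub_cancel, not_lt]
      nlinarith
    rw [if_neg hcol, if_neg hcol, Fin.lastCases_last, sub_neg_eq_add]
    rfl
  | cast j =>
    have hcol : (finProdFinEquiv (j.castSucc, b) : ℕ) < (m + 1 - 1) * k := by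
      simp only [finProdFinEquiv_apply_val, Fin.val_castSucc, Nat.add_sub_cancel]
      nlinarith [b.2, j.2]
    have hsucc : (finProdFinEquiv (j.succ, b) : ℕ) = finProdFinEquiv (j.castSucc, b) + k := by
      simp only [finProdFinEquiv_apply_val, Fin.val_succ, Fin.val_castSucc]
      ring
    simp only [if_pos hcol, ← hsucc, Fin.val_inj, EmbeddingLike.apply_eq_iff_eq,
      Fin.lastCases_castSucc, Prod.mk.injEq, ite_and, Matrix.sub_apply, Matrix.ite_apply,
      Matrix.smul_apply, one_apply, Matrix.zero_apply, smul_eq_mul, mul_ite, mul_zero]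

/-- `det(λT − S)` equals, up to a sign depending only on `d` and `k`, the determinant of
the matrix polynomial `M₀ + Σ_{i=1}^{d−1} (M_i + N_i) λ^i + N_d λ^d`; in particular the
pencil `(S, T)` and the matrix polynomial have the same eigenvalues. -/
theorem pencil_det_eq_polynomial_det (d k : ℕ) (hd : 0 < d) (hk : 0 < k) :
    ∃ σ : ℂ, (σ = 1 ∨ σ = -1) ∧
      ∀ (M N : ℕ → Matrix (Fin k) (Fin k) ℂ) (lam : ℂ),
        (lam • blockT d k hk N - blockCompanion d k hk M).det =
          σ * (M 0 + (∑ i ∈ Finset.Ico 1 d, lam ^ i • (M i + N i)) + lam ^ d • N d).det ∧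
        ((lam • blockT d k hk N - blockCompanion d k hk M).det = 0 ↔
          (M 0 + (∑ i ∈ Finset.Ico 1 d, lam ^ i • (M i + N i)) + lam ^ d • N d).det = 0) := by
  obtain ⟨m, rfl⟩ : ∃ m, d = m + 1 := ⟨d - 1, by omega⟩
  set σ : ℂ := ((linearizationSign m (Fin k) : ℤ) : ℂ)
  have hσ : σ = 1 ∨ σ = -1 := by
    rcases Int.units_eq_one_or (linearizationSign m (Fin k)) with h | h <;> simp [σ, h]
  refine ⟨σ, hσ, fun M N lam => ?_⟩
  have hdet : (lam • blockT (m + 1) k hk N - blockCompanion (m + 1) k hk M).det =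
      σ * (M 0 + (∑ i ∈ Finset.Ico 1 (m + 1), lam ^ i • (M i + N i)) +
        lam ^ (m + 1) • N (m + 1)).det := by
    rw [← det_submatrix_equiv_self finProdFinEquiv, submatrix_finProdFinEquiv_pencil,
      det_comp_pencilBlocks,
      Fin.sum_univ_eq_sum_range (fun l => lam ^ l • (lam • N (l + 1) + M l)),
      sum_range_pow_smul_smul_add]
  refine ⟨hdet, ?_⟩
  rw [hdet, mul_eq_zero, or_iff_right]
  rcases hσ with h | h <;> simp [h]
end
end

section
/- Let n ≥ 1, let C ∈ ℂ^{(n+1)×(n+1)} be unitary, let B ∈ ℂ^{(n+1)×(n+1)} be unitary, and let y ∈ ℂ^{n+1}. Suppose the last row of C^*(B + e_1 y^T) is zero and that ρ := e_{n+1}^T C^* e_1 ≠ 0. Then y^T = −ρ^{−1} · e_{n+1}^T C^* B; that is, the rank-one part is completely recoverable from the unitary factors C and B. -/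
open Matrix

/-- **Recovery of the rank-one part from the unitary factors.**  If `C`, `B` are unitary,
the last row of `C^*(B + e₁ yᵀ)` vanishes, and `ρ = e_{n+1}ᵀ C^* e₁ ≠ 0`, then
`yᵀ = −ρ⁻¹ e_{n+1}ᵀ C^* B`. -/
theorem rank_one_part_recoverable (n : ℕ) (hn : 1 ≤ n)
    (C B : Matrix (Fin (n + 1)) (Fin (n + 1)) ℂ)
    (hC : C ∈ Matrix.unitaryGroup (Fin (n + 1)) ℂ)
    (hB : B ∈ Matrix.unitaryGroup (Fin (n + 1)) ℂ)
    (y : Fin (n + 1) → ℂ)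
    (hrow : ∀ q,
      (Cᴴ * (B + vecMulVec (Pi.single (0 : Fin (n + 1)) (1 : ℂ)) y)) (Fin.last n) q = 0)
    (hρ : Cᴴ (Fin.last n) 0 ≠ 0) :
    ∀ q, y q = -(Cᴴ (Fin.last n) 0)⁻¹ * (Cᴴ * B) (Fin.last n) q := by
  intro q
  have h := hrow q
  rw [Matrix.mul_add, Matrix.add_apply] at h
  have hv : (Cᴴ * vecMulVec (Pi.single (0 : Fin (n + 1)) (1 : ℂ)) y) (Fin.last n) q
      = Cᴴ (Fin.last n) 0 * y q := by
    simp [Matrix.mul_apply, vecMulVec_apply, mul_comm, Finset.sum_eq_single (0 : Fin (n+1)),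
      Pi.single_apply]
  rw [hv] at h
  rw [eq_neg_of_add_eq_zero_left h, neg_mul_neg, ← mul_assoc, inv_mul_cancel₀ hρ, one_mul]
end

section
/- Let n ≥ 1, ℓ ∈ {1,…,n}, and let x ∈ ℂ^{n+1} satisfy x_j = 0 for every j with ℓ < j ≤ n and x_{n+1} ≠ 0. Then there exist core transformations C_1, …, C_n ∈ ℂ^{(n+1)×(n+1)}, with C_j having active part at position j, such that C_j equals the transposition matrix F_j (active part [[0,1],[1,0]]) for every j = ℓ+1, …, n, and C_1 C_2 ⋯ C_n x = α e_1 for some α ∈ ℂ with |α| = ‖x‖_2. -/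
open Matrix

noncomputable section

/-- The permutation matrix of the transposition exchanging coordinates `a` and `b`;
`swapMat t.castSucc t.succ` is the core transformation `F_t` with counteridentity
active part. -/
def swapMat {m : ℕ} (a b : Fin m) : Matrix (Fin m) (Fin m) ℂ :=
  fun p q => if p = Equiv.swap a b q then 1 else 0

/-!
The matrices are applied from the right, `C_n` first. The transpositions `C_n, …, C_{ℓ+1}`
carry the last entry `x_{n+1}` up to position `ℓ + 1`, passing only over zero entries. Then
each `C_j` with `j ≤ ℓ` is a Givens rotation that annihilates entry `j + 1` by mixing it into
entry `j`. What is left is a multiple `α e_1`, and `|α| = ‖x‖₂` because all `C_j` are unitary.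
-/

section Unitary

variable {𝕜 : Type*} [RCLike 𝕜]

theorem givens_mem_unitaryGroup {a b : 𝕜} (h : ‖a‖ ^ 2 + ‖b‖ ^ 2 = 1) :
    !![star a, star b; -b, a] ∈ unitaryGroup (Fin 2) 𝕜 := by
  have h' : (starRingEnd 𝕜) a * a + (starRingEnd 𝕜) b * b = 1 := by
    simp only [RCLike.conj_mul]
    exact_mod_cast h
  rw [mem_unitaryGroup_iff']
  ext i k
  fin_cases i <;> fin_cases k <;> simp [mul_apply, Fin.sum_univ_two] <;>
    first | linear_combination h' | ring

theorem exists_mem_unitaryGroup_mulVec_one_eq_zero (a b : 𝕜) :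
    ∃ G ∈ unitaryGroup (Fin 2) 𝕜, (G *ᵥ ![a, b]) 1 = 0 := by
  by_cases hab : a = 0 ∧ b = 0
  · exact ⟨1, one_mem _, by simp [hab]⟩
  have hpos : 0 < ‖a‖ ^ 2 + ‖b‖ ^ 2 := by
    refine lt_of_le_of_ne (by positivity) (Ne.symm ?_)
    simpa [add_eq_zero_iff_of_nonneg, sq_nonneg] using hab
  set r : ℝ := √(‖a‖ ^ 2 + ‖b‖ ^ 2)
  have hr : 0 < r := Real.sqrt_pos.2 hpos
  refine ⟨_, givens_mem_unitaryGroup (a := a / r) (b := b / r) ?_, ?_⟩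
  · rw [norm_div, norm_div, RCLike.norm_ofReal, abs_of_pos hr, div_pow, div_pow,
      ← add_div, Real.sq_sqrt hpos.le, div_self hpos.ne']
  · simp only [mulVec, dotProduct, Fin.sum_univ_two, of_apply, cons_val', cons_val_zero,
      cons_val_one, cons_val_fin_one, star_div₀, RCLike.star_def, RCLike.conj_ofReal, neg_mul]
    ring

theorem norm_toLp_mulVec_of_mem_unitaryGroup {ι : Type*} [Fintype ι] [DecidableEq ι]
    {U : Matrix ι ι 𝕜} (hU : U ∈ unitaryGroup ι 𝕜) (v : ι → 𝕜) :
    ‖WithLp.toLp 2 (U *ᵥ v)‖ = ‖WithLp.toLp 2 v‖ := by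
  rw [← toEuclideanCLM_toLp]
  exact ContinuousLinearMap.norm_map_of_mem_unitary (Unitary.map_mem _ hU) _

end Unitary

theorem swapMat_eq_permMatrix {m : ℕ} (a b : Fin m) :
    swapMat a b = (Equiv.swap a b).permMatrix ℂ := by
  ext p q
  simp [swapMat, PEquiv.toMatrix_apply, Equiv.swap_apply_eq_iff]

theorem swapMat_mulVec {m : ℕ} (a b : Fin m) (v : Fin m → ℂ) :
    swapMat a b *ᵥ v = v ∘ Equiv.swap a b := by
  rw [swapMat_eq_permMatrix, permMatrix_mulVec]

theorem swapMat_mem_unitaryGroup {m : ℕ} (a b : Fin m) :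
    swapMat a b ∈ unitaryGroup (Fin m) ℂ := by
  rw [swapMat_eq_permMatrix, mem_unitaryGroup_iff', star_eq_conjTranspose,
    conjTranspose_permMatrix, ← permMatrix_mul, mul_inv_cancel, permMatrix_one]

section CoreTransformation

variable {n : ℕ}

theorem IsCore.mulVec_apply_of_ne {j : Fin n} {U : Matrix (Fin (n + 1)) (Fin (n + 1)) ℂ}
    (hU : IsCore j U) (v : Fin (n + 1) → ℂ) {p : Fin (n + 1)} (hp : p ≠ j.castSucc)
    (hp' : p ≠ j.succ) : (U *ᵥ v) p = v p := by
  have hrow : ∀ q, U p q = if p = q then 1 else 0 := fun q => hU.2 p q (by tauto)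
  simp [mulVec, dotProduct, hrow]

def coreMat (j : Fin n) (G : Matrix (Fin 2) (Fin 2) ℂ) : Matrix (Fin (n + 1)) (Fin (n + 1)) ℂ :=
  Matrix.of fun p q =>
    if (p = j.castSucc ∨ p = j.succ) ∧ (q = j.castSucc ∨ q = j.succ) then
      G (if p = j.castSucc then 0 else 1) (if q = j.castSucc then 0 else 1)
    else (1 : Matrix (Fin (n + 1)) (Fin (n + 1)) ℂ) p q

theorem coreMat_mulVec (j : Fin n) (G : Matrix (Fin 2) (Fin 2) ℂ) (v : Fin (n + 1) → ℂ) :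
    coreMat j G *ᵥ v = fun p =>
      if p = j.castSucc then G 0 0 * v j.castSucc + G 0 1 * v j.succ
      else if p = j.succ then G 1 0 * v j.castSucc + G 1 1 * v j.succ
      else v p := by
  have hne : j.castSucc ≠ j.succ := Fin.castSucc_lt_succ.ne
  ext p
  by_cases hp : p = j.castSucc ∨ p = j.succ
  · rw [mulVec, dotProduct, Fintype.sum_eq_add _ _ hne fun q hq => by
      have hpq : p ≠ q := by rintro rfl; tauto
      simp [coreMat, hq, one_apply, hpq]]
    rcases hp with rfl | rfl <;> simp [coreMat, hne, hne.symm]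
  · push Not at hp
    simp [mulVec, dotProduct, coreMat, hp, one_apply]

theorem coreMat_mul (j : Fin n) (G H : Matrix (Fin 2) (Fin 2) ℂ) :
    coreMat j G * coreMat j H = coreMat j (G * H) := by
  have hne : j.castSucc ≠ j.succ := Fin.castSucc_lt_succ.ne
  refine ext_iff_mulVec.2 fun v => ?_
  rw [← mulVec_mulVec]
  ext p
  simp only [coreMat_mulVec, if_pos, hne, hne.symm, if_false, mul_apply, Fin.sum_univ_two]
  split_ifs <;> ring

theorem conjTranspose_coreMat (j : Fin n) (G : Matrix (Fin 2) (Fin 2) ℂ) :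
    (coreMat j G)ᴴ = coreMat j Gᴴ := by
  ext p q
  by_cases h : (p = j.castSucc ∨ p = j.succ) ∧ (q = j.castSucc ∨ q = j.succ)
  · simp [coreMat, h]
  · have h' : ¬((q = j.castSucc ∨ q = j.succ) ∧ (p = j.castSucc ∨ p = j.succ)) := (h ·.symm)
    simp [coreMat, h, h', one_apply, eq_comm]

theorem coreMat_one (j : Fin n) : coreMat j 1 = 1 := by
  have hne : j.castSucc ≠ j.succ := Fin.castSucc_lt_succ.ne
  ext p q
  simp only [coreMat, of_apply, one_apply]
  split_ifs <;> simp_all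

theorem isCore_coreMat (j : Fin n) {G : Matrix (Fin 2) (Fin 2) ℂ}
    (hG : G ∈ unitaryGroup (Fin 2) ℂ) : IsCore j (coreMat j G) := by
  refine ⟨?_, fun p q h => by simp [coreMat, h, one_apply]⟩
  rw [mem_unitaryGroup_iff', star_eq_conjTranspose, conjTranspose_coreMat, coreMat_mul,
    ← star_eq_conjTranspose, mem_unitaryGroup_iff'.1 hG, coreMat_one]

theorem isCore_swapMat (j : Fin n) : IsCore j (swapMat j.castSucc j.succ) := by
  refine ⟨swapMat_mem_unitaryGroup _ _, fun p q h => ?_⟩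
  simp only [swapMat, Equiv.swap_apply_def]
  split_ifs <;> simp_all

theorem exists_isCore_mulVec_succ_eq_zero (j : Fin n) (v : Fin (n + 1) → ℂ) :
    ∃ U, IsCore j U ∧ (U *ᵥ v) j.succ = 0 := by
  obtain ⟨G, hG, hGv⟩ := exists_mem_unitaryGroup_mulVec_one_eq_zero (v j.castSucc) (v j.succ)
  refine ⟨coreMat j G, isCore_coreMat j hG, ?_⟩
  rw [coreMat_mulVec]
  simpa [Fin.castSucc_lt_succ.ne', mulVec, dotProduct, Fin.sum_univ_two] using hGv

end CoreTransformation

section Sweep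

variable {m : ℕ}

theorem seqProd_succ {k : ℕ} (A : Fin (k + 1) → Matrix (Fin m) (Fin m) ℂ) :
    seqProd A = A 0 * seqProd (Fin.tail A) := by
  rw [seqProd, List.finRange_succ, List.map_cons, List.map_map, List.prod_cons]
  rfl

theorem seqProd_mem_unitaryGroup {k : ℕ} {A : Fin k → Matrix (Fin m) (Fin m) ℂ}
    (hA : ∀ i, A i ∈ unitaryGroup (Fin m) ℂ) : seqProd A ∈ unitaryGroup (Fin m) ℂ :=
  Submonoid.list_prod_mem _ (by simpa using hA)

theorem exists_seqProd_mulVec_of_step {k : ℕ} (P : ℕ → (Fin m → ℂ) → Prop)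
    (Q : Fin k → Matrix (Fin m) (Fin m) ℂ → Prop)
    (step : ∀ (j : Fin k) v, P ((j : ℕ) + 1) v → ∃ U, Q j U ∧ P j (U *ᵥ v))
    {x : Fin m → ℂ} (hx : P k x) :
    ∃ C : Fin k → Matrix (Fin m) (Fin m) ℂ, (∀ j, Q j (C j)) ∧ P 0 (seqProd C *ᵥ x) := by
  induction k generalizing P with
  | zero => exact ⟨Fin.elim0, Fin.rec0, by simpa [seqProd] using hx⟩
  | succ k ih =>
    obtain ⟨C, hC, hCx⟩ := ih (fun i => P (i + 1)) (fun j => Q j.succ) (fun j => step j.succ) hx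
    obtain ⟨U, hU, hUx⟩ := step 0 _ hCx
    refine ⟨Fin.cons U C, Fin.cases hU hC, ?_⟩
    rwa [seqProd_succ, Fin.tail_cons, Fin.cons_zero, ← mulVec_mulVec]

end Sweep

section Spike

variable {n : ℕ}

/-- The shape of the vector once `C k, …, C (n - 1)` have been applied: it vanishes outside
`{0, …, min k ℓ} ∪ {k}`. -/
def IsSpike (ℓ k : ℕ) (v : Fin (n + 1) → ℂ) : Prop :=
  ∀ p : Fin (n + 1), min k ℓ < p → (p : ℕ) ≠ k → v p = 0

theorem IsSpike.eq_smul_single_zero {ℓ : ℕ} {v : Fin (n + 1) → ℂ} (hv : IsSpike ℓ 0 v) :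
    v = v 0 • Pi.single 0 1 := by
  ext p
  rcases eq_or_ne p 0 with rfl | hp
  · simp
  · rw [Pi.smul_apply, Pi.single_eq_of_ne hp, smul_zero]
    have hp' : (p : ℕ) ≠ 0 := Fin.val_ne_zero_iff.2 hp
    exact hv p (by omega) hp'

theorem exists_isCore_isSpike_mulVec (ℓ : ℕ) (j : Fin n) {v : Fin (n + 1) → ℂ}
    (hv : IsSpike ℓ ((j : ℕ) + 1) v) :
    ∃ U, (IsCore j U ∧ (ℓ < j → U = swapMat j.castSucc j.succ)) ∧ IsSpike ℓ j (U *ᵥ v) := by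
  by_cases hj : ℓ < j
  · refine ⟨_, ⟨isCore_swapMat j, fun _ => rfl⟩, fun p hp hpj => ?_⟩
    rw [swapMat_mulVec, Function.comp_apply, Equiv.swap_apply_def]
    split_ifs with h₁ h₂ <;> apply hv <;>
      simp only [Fin.ext_iff, Fin.val_castSucc, Fin.val_succ] at * <;> omega
  · obtain ⟨U, hU, hUv⟩ := exists_isCore_mulVec_succ_eq_zero j v
    refine ⟨U, ⟨hU, fun h => absurd h hj⟩, fun p hp hpj => ?_⟩
    rcases eq_or_ne p j.succ with rfl | hps
    · exact hUv
    · rw [hU.mulVec_apply_of_ne v (by simpa [Fin.ext_iff] using hpj) hps]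
      have hps' : (p : ℕ) ≠ j + 1 := by simpa [Fin.ext_iff] using hps
      exact hv p (by omega) hps'

end Spike

/-- Indexing: `ℓ : Fin n` is the paper's 1-based `ℓ` shifted down by one, and `C j` is the
paper's `C_{j+1}`. -/
theorem annihilate_spike_vector_general (n : ℕ) (ℓ : Fin n)
    (x : Fin (n + 1) → ℂ)
    (hx : ∀ j : Fin (n + 1), (ℓ : ℕ) < (j : ℕ) → (j : ℕ) < n → x j = 0) :
    ∃ C : Fin n → Matrix (Fin (n + 1)) (Fin (n + 1)) ℂ,
      (∀ j, IsCore j (C j)) ∧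
      (∀ j : Fin n, (ℓ : ℕ) < (j : ℕ) → C j = swapMat j.castSucc j.succ) ∧
      ∃ α : ℂ, ‖α‖ = Real.sqrt (∑ i, ‖x i‖ ^ 2) ∧
        (seqProd C).mulVec x = α • (Pi.single (0 : Fin (n + 1)) 1 : Fin (n + 1) → ℂ) := by
  have hx' : IsSpike ℓ n x := fun p hp hpn => hx p (by omega) (by omega)
  obtain ⟨C, hC, hCx⟩ := exists_seqProd_mulVec_of_step (IsSpike ℓ) _
    (fun j _ => exists_isCore_isSpike_mulVec ℓ j) hx'
  have hU : seqProd C ∈ unitaryGroup (Fin (n + 1)) ℂ :=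
    seqProd_mem_unitaryGroup fun j => (hC j).1.1
  refine ⟨C, fun j => (hC j).1, fun j => (hC j).2, _, ?_, hCx.eq_smul_single_zero⟩
  rw [← EuclideanSpace.norm_eq (WithLp.toLp 2 x), ← norm_toLp_mulVec_of_mem_unitaryGroup hU,
    hCx.eq_smul_single_zero]
  simp [norm_smul]

/-- Annihilation of a spike vector: if `x ∈ ℂ^{n+1}` vanishes on entries strictly
between position `ℓ` and the last one, and its last entry is nonzero, there are core
transformations `C₁, …, C_n` with `C_j = F_j` for `j > ℓ` (1-based) such that
`C₁ ⋯ C_n x = α e₁` with `|α| = ‖x‖₂`.  (Here `ℓ : Fin n` is the 0-based index of the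
1-based position `ℓ + 1 ∈ {1, …, n}`.) -/
theorem annihilate_spike_vector (n : ℕ) (hn : 1 ≤ n) (ℓ : Fin n)
    (x : Fin (n + 1) → ℂ)
    (hx : ∀ j : Fin (n + 1), (ℓ : ℕ) < (j : ℕ) → (j : ℕ) < n → x j = 0)
    (hxn : x (Fin.last n) ≠ 0) :
    ∃ C : Fin n → Matrix (Fin (n + 1)) (Fin (n + 1)) ℂ,
      (∀ j, IsCore j (C j)) ∧
      (∀ j : Fin n, (ℓ : ℕ) < (j : ℕ) → C j = swapMat j.castSucc j.succ) ∧
      ∃ α : ℂ, ‖α‖ = Real.sqrt (∑ i, ‖x i‖ ^ 2) ∧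
        (seqProd C).mulVec x = α • (Pi.single (0 : Fin (n + 1)) 1 : Fin (n + 1) → ℂ) :=
  annihilate_spike_vector_general n ℓ x hx
end
end

section
/- Let n ≥ 1, ℓ ∈ {1,…,n}, and let R ∈ ℂ^{n×n} be an upper triangular identity-plus-spike matrix with spike in column ℓ: R_{ij} = δ_{ij} for every j ≠ ℓ, and R_{iℓ} = 0 for i > ℓ (the entries R_{iℓ} for i ≤ ℓ are arbitrary). Define the embedding R̲ ∈ ℂ^{(n+1)×(n+1)} whose leading principal n×n submatrix is R, whose (ℓ, n+1) entry is 1, and whose remaining entries (in particular all of row n+1) are zero. Then there exist core transformations C_1, …, C_n and B_1, …, B_n in ℂ^{(n+1)×(n+1)}, with C_j and B_j having active part at position j, and a vector y ∈ ℂ^{n+1} such that R̲ = (C_1 C_2 ⋯ C_n)^* ( B_1 B_2 ⋯ B_n + e_1 y^T ). -/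
open Matrix

noncomputable section

/-! Indices are 0-based, so the extra row and column of `R̲` have index `n`. Write `r` for the
spike column of `R` and `T` for the permutation matrix of the transposition `(ℓ n)`; then
`R̲ = T + (r - eₙ) e_ℓᵀ`.

Take `C_j` to be the swap of `j, j+1` for `j > ℓ`, and for `j ≤ ℓ` the Givens rotation that folds
entry `j+1` of the current vector into entry `j`. Applied from the right, the swaps carry the
`-1` of `r - eₙ` up to position `ℓ+1` and the rotations then annihilate everything below
position `0`, so `C (r - eₙ) = -t • e₀` for `C = C₀ ⋯ C_{n-1}` and some `t > 0`.

Put `B_j = C_j` for `j ≠ ℓ` and `B_ℓ = C_ℓ S_ℓ`, with `S_ℓ` the swap of `ℓ, ℓ+1`. The trailing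
product `P = C_{ℓ+1} ⋯ C_{n-1}` is unitary and maps `e_ℓ, eₙ` to `e_ℓ, e_{ℓ+1}`; as both
transpositions are reflections `1 - u uᴴ` and `P` carries one `u` to the other, `S_ℓ P = P T`.
Hence `B₀ ⋯ B_{n-1} = C T` and `C R̲ = B + e₀ yᵀ` with `y = -t • e_ℓ`. -/

section Cores

variable {n : ℕ}

theorem IsCore.mul {j : Fin n} {U V : Matrix (Fin (n + 1)) (Fin (n + 1)) ℂ}
    (hU : IsCore j U) (hV : IsCore j V) : IsCore j (U * V) := by
  refine ⟨mul_mem hU.1 hV.1, fun p q hpq => ?_⟩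
  rw [not_and_or] at hpq
  rcases hpq with hp | hq
  · have hrow : ∀ k, U p k = if p = k then 1 else 0 := fun k => hU.2 p k (by tauto)
    simp only [mul_apply, hrow, ite_mul, one_mul, zero_mul, Finset.sum_ite_eq, Finset.mem_univ,
      if_true]
    exact hV.2 p q (by tauto)
  · have hcol : ∀ k, V k q = if k = q then 1 else 0 := fun k => hV.2 k q (by tauto)
    simp only [mul_apply, hcol, mul_ite, mul_one, mul_zero, Finset.sum_ite_eq', Finset.mem_univ,
      if_true]
    exact hU.2 p q (by tauto)

def swapCore (j : Fin n) : Matrix (Fin (n + 1)) (Fin (n + 1)) ℂ :=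
  (Equiv.swap j.castSucc j.succ).permMatrix ℂ

theorem isCore_swapCore (j : Fin n) : IsCore j (swapCore j) := by
  refine ⟨?_, fun p q hpq => ?_⟩
  · rw [mem_unitaryGroup_iff, star_eq_conjTranspose, swapCore, conjTranspose_permMatrix,
      ← permMatrix_mul, Equiv.swap_inv, Equiv.swap_mul_self, permMatrix_one]
  · simp only [swapCore, PEquiv.toMatrix_apply, Equiv.toPEquiv_apply, Option.mem_def,
      Option.some.injEq]
    rw [Equiv.swap_apply_def]
    split_ifs <;> simp_all

theorem swapCore_mulVec_single_succ (j : Fin n) :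
    swapCore j *ᵥ Pi.single j.succ 1 = Pi.single j.castSucc 1 := by
  rw [swapCore, permMatrix_mulVec]
  funext p
  simp [Pi.single_apply, Equiv.swap_apply_eq_iff]

theorem swapCore_mulVec_single_of_ne {j : Fin n} {p : Fin (n + 1)} (h₀ : p ≠ j.castSucc)
    (h₁ : p ≠ j.succ) : swapCore j *ᵥ Pi.single p 1 = Pi.single p 1 := by
  rw [swapCore, permMatrix_mulVec]
  funext q
  simp [Pi.single_apply, Equiv.swap_apply_eq_iff, Equiv.swap_apply_of_ne_of_ne h₀ h₁]

def coreEmbed (j : Fin n) (g : Matrix (Fin 2) (Fin 2) ℂ) : Matrix (Fin (n + 1)) (Fin (n + 1)) ℂ :=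
  of fun p q =>
    if (p = j.castSucc ∨ p = j.succ) ∧ (q = j.castSucc ∨ q = j.succ) then
      g (if p = j.castSucc then 0 else 1) (if q = j.castSucc then 0 else 1)
    else (1 : Matrix (Fin (n + 1)) (Fin (n + 1)) ℂ) p q

theorem coreEmbed_mulVec (j : Fin n) (g : Matrix (Fin 2) (Fin 2) ℂ) (v : Fin (n + 1) → ℂ)
    (p : Fin (n + 1)) :
    (coreEmbed j g *ᵥ v) p =
      if p = j.castSucc then (g *ᵥ ![v j.castSucc, v j.succ]) 0
      else if p = j.succ then (g *ᵥ ![v j.castSucc, v j.succ]) 1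
      else v p := by
  have hne : j.castSucc ≠ j.succ := Fin.castSucc_lt_succ.ne
  simp only [mulVec, dotProduct, coreEmbed, of_apply, Fin.sum_univ_two, cons_val_zero,
    cons_val_one]
  split_ifs with h₁ h₂
  · subst h₁
    rw [Fintype.sum_eq_add j.castSucc j.succ hne
      (fun q hq => by simp [hq.1, hq.2, Ne.symm hq.1, one_apply])]
    simp [hne, hne.symm]
  · subst h₂
    rw [Fintype.sum_eq_add j.castSucc j.succ hne
      (fun q hq => by simp [hq.1, hq.2, Ne.symm hq.2, one_apply])]
    simp [hne, hne.symm]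
  · simp [h₁, h₂, one_apply]

theorem coreEmbed_mul_coreEmbed (j : Fin n) (g h : Matrix (Fin 2) (Fin 2) ℂ) :
    coreEmbed j g * coreEmbed j h = coreEmbed j (g * h) := by
  have hne : j.castSucc ≠ j.succ := Fin.castSucc_lt_succ.ne
  refine ext_of_mulVec_single fun i => funext fun p => ?_
  have hpair : ∀ v : Fin (n + 1) → ℂ, ![(coreEmbed j h *ᵥ v) j.castSucc,
      (coreEmbed j h *ᵥ v) j.succ] = h *ᵥ ![v j.castSucc, v j.succ] := fun v => by
    ext k; fin_cases k <;> simp [coreEmbed_mulVec, hne.symm]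
  rw [← mulVec_mulVec, coreEmbed_mulVec j g, hpair, coreEmbed_mulVec j (g * h), mulVec_mulVec]
  split_ifs with h₁ h₂
  · rfl
  · rfl
  · simp [coreEmbed_mulVec, h₁, h₂]

theorem coreEmbed_one (j : Fin n) : coreEmbed j 1 = 1 := by
  ext p q
  simp only [coreEmbed, of_apply, one_apply]
  split_ifs <;> simp_all [Fin.castSucc_lt_succ.ne, Fin.castSucc_lt_succ.ne']

theorem conjTranspose_coreEmbed (j : Fin n) (g : Matrix (Fin 2) (Fin 2) ℂ) :
    (coreEmbed j g)ᴴ = coreEmbed j gᴴ := by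
  ext p q
  simp only [conjTranspose_apply, coreEmbed, of_apply, one_apply]
  by_cases h : (p = j.castSucc ∨ p = j.succ) ∧ (q = j.castSucc ∨ q = j.succ)
  · rw [if_pos ⟨h.2, h.1⟩, if_pos h]
  · rw [if_neg (fun h' => h ⟨h'.2, h'.1⟩), if_neg h]
    by_cases hpq : p = q <;> simp [hpq, Ne.symm]

theorem isCore_coreEmbed (j : Fin n) {g : Matrix (Fin 2) (Fin 2) ℂ}
    (hg : g ∈ unitaryGroup (Fin 2) ℂ) : IsCore j (coreEmbed j g) := by
  refine ⟨?_, fun p q hpq => by simp [coreEmbed, hpq, one_apply]⟩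
  rw [mem_unitaryGroup_iff', star_eq_conjTranspose, conjTranspose_coreEmbed,
    coreEmbed_mul_coreEmbed, ← star_eq_conjTranspose, (mem_unitaryGroup_iff').1 hg, coreEmbed_one]

theorem list_prod_map_mem_unitaryGroup {A : Fin n → Matrix (Fin (n + 1)) (Fin (n + 1)) ℂ}
    (hA : ∀ j, IsCore j (A j)) (l : List (Fin n)) :
    (l.map A).prod ∈ unitaryGroup (Fin (n + 1)) ℂ :=
  Submonoid.list_prod_mem _ fun _ hU => by
    obtain ⟨j, -, rfl⟩ := List.mem_map.1 hU
    exact (hA j).1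

end Cores

def givens (a : ℂ) (s t : ℝ) : Matrix (Fin 2) (Fin 2) ℂ :=
  (t : ℂ)⁻¹ • !![-starRingEnd ℂ a, s; s, a]

section Givens

variable {a : ℂ} {s t : ℝ}

theorem givens_mem_unitaryGroup_s17 (ht : t ≠ 0) (hst : t ^ 2 = Complex.normSq a + s ^ 2) :
    givens a s t ∈ unitaryGroup (Fin 2) ℂ := by
  have htC : (t : ℂ) ^ 2 = starRingEnd ℂ a * a + (s : ℂ) ^ 2 := by
    rw [← Complex.normSq_eq_conj_mul_self]; exact_mod_cast hst
  have ht' : (t : ℂ) ≠ 0 := by exact_mod_cast ht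
  rw [mem_unitaryGroup_iff]
  ext k l
  fin_cases k <;> fin_cases l <;> simp [givens, mul_apply, Fin.sum_univ_two] <;> field_simp <;>
    rw [htC] <;> ring

theorem givens_mulVec (ht : t ≠ 0) (hst : t ^ 2 = Complex.normSq a + s ^ 2) :
    givens a s t *ᵥ ![a, -s] = ![-(t : ℂ), 0] := by
  have htC : (t : ℂ) ^ 2 = starRingEnd ℂ a * a + (s : ℂ) ^ 2 := by
    rw [← Complex.normSq_eq_conj_mul_self]; exact_mod_cast hst
  have ht' : (t : ℂ) ≠ 0 := by exact_mod_cast ht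
  ext k
  fin_cases k <;> simp [givens] <;> field_simp
  · rw [htC]; ring
  · ring

end Givens

section Permutations

variable {m R : Type*} [DecidableEq m] [CommRing R]

theorem permMatrix_swap_eq_one_sub (a b : m) :
    (Equiv.swap a b).permMatrix R =
      1 - vecMulVec (Pi.single a 1 - Pi.single b 1) (Pi.single a 1 - Pi.single b 1) := by
  ext p q
  simp only [PEquiv.toMatrix_apply, Equiv.toPEquiv_apply, Option.mem_def, Option.some.injEq,
    Matrix.sub_apply, one_apply, vecMulVec_apply, Pi.sub_apply, Pi.single_apply,
    Equiv.swap_apply_def]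
  split_ifs <;> subst_vars <;> simp_all

variable [Fintype m] [StarRing R]

theorem permMatrix_swap_mul_eq_mul_permMatrix_swap {U : Matrix m m R}
    (hU : U ∈ unitaryGroup m R) {a b c d : m} (ha : U *ᵥ Pi.single a 1 = Pi.single c 1)
    (hb : U *ᵥ Pi.single b 1 = Pi.single d 1) :
    (Equiv.swap c d).permMatrix R * U = U * (Equiv.swap a b).permMatrix R := by
  have hstar : ∀ x y : m,
      star (Pi.single x 1 - Pi.single y 1 : m → R) = Pi.single x 1 - Pi.single y 1 :=
    fun x y => by simp [star_sub, Pi.star_single]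
  have hz : U *ᵥ (Pi.single a 1 - Pi.single b 1) = Pi.single c 1 - Pi.single d 1 := by
    rw [mulVec_sub, ha, hb]
  have hu : (Pi.single c 1 - Pi.single d 1) ᵥ* U = Pi.single a 1 - Pi.single b 1 := by
    rw [← hstar c d, ← conjTranspose_conjTranspose U, ← star_mulVec, ← hz, mulVec_mulVec,
      ← star_eq_conjTranspose, (mem_unitaryGroup_iff').1 hU, one_mulVec, hstar]
  rw [permMatrix_swap_eq_one_sub, permMatrix_swap_eq_one_sub, sub_mul, mul_sub, one_mul, mul_one,
    vecMulVec_mul, mul_vecMulVec, hz, hu]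

end Permutations

section OrderedProducts

theorem List.finRange_eq_take_append_cons_drop {k : ℕ} (j : Fin k) :
    List.finRange k = (List.finRange k).take j ++ j :: (List.finRange k).drop (j + 1) := by
  conv_lhs => rw [← List.take_append_drop j (List.finRange k)]
  rw [List.drop_eq_getElem_cons (by simp), List.getElem_finRange]
  rfl

theorem seqProd_update_mul {m k : ℕ} (A : Fin k → Matrix (Fin m) (Fin m) ℂ) (j : Fin k)
    {X Y : Matrix (Fin m) (Fin m) ℂ}
    (h : X * (((List.finRange k).drop (j + 1)).map A).prod =
      (((List.finRange k).drop (j + 1)).map A).prod * Y) :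
    seqProd (Function.update A j (A j * X)) = seqProd A * Y := by
  have hsplit := List.finRange_eq_take_append_cons_drop j
  have hj : j ∉ (List.finRange k).take j ++ (List.finRange k).drop (j + 1) := by
    have := List.nodup_finRange k
    rw [hsplit, List.nodup_middle, List.nodup_cons] at this
    exact this.1
  have hA : ∀ l : List (Fin k), (∀ i ∈ l, i ≠ j) →
      l.map (Function.update A j (A j * X)) = l.map A :=
    fun l hl => List.map_congr_left fun i hi => Function.update_of_ne (hl i hi) _ _
  rw [seqProd, seqProd, hsplit, List.map_append, List.map_append, List.map_cons, List.map_cons,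
    hA _ (fun i hi he => hj (List.mem_append_left _ (by rwa [he] at hi))),
    hA (List.drop _ _) (fun i hi he => hj (List.mem_append_right _ (by rwa [he] at hi))),
    Function.update_self, List.prod_append, List.prod_append, List.prod_cons, List.prod_cons]
  simp only [mul_assoc]
  rw [h]

theorem prod_map_drop_finRange_mulVec {α : Type*} [Semiring α] {m k : ℕ}
    (A : Fin k → Matrix (Fin m) (Fin m) α) (v : Fin (k + 1) → Fin m → α) (a : Fin (k + 1))
    (h : ∀ j : Fin k, a ≤ j.castSucc → A j *ᵥ v j.succ = v j.castSucc) :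
    (((List.finRange k).drop a).map A).prod *ᵥ v (Fin.last k) = v a := by
  induction a using Fin.reverseInduction with
  | last => simp [List.drop_eq_nil_of_le]
  | cast i ih =>
    rw [List.drop_eq_getElem_cons (by simp), List.getElem_finRange, List.map_cons,
      List.prod_cons, ← mulVec_mulVec]
    exact (congrArg (A i *ᵥ ·) (ih fun j hj => h j (Fin.castSucc_lt_succ.le.trans hj))).trans
      (h i le_rfl)

end OrderedProducts

namespace SpikeFactorization

variable {n : ℕ} (ℓ : Fin n) (R : Matrix (Fin n) (Fin n) ℂ)

def spikeCoeff (i : ℕ) : ℂ :=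
  if h : i ≤ ℓ then R ⟨i, h.trans_lt ℓ.isLt⟩ ℓ else 0

/-- The norm of `(R m ℓ, …, R ℓ ℓ, -1)`. -/
def tailNorm (m : ℕ) : ℝ :=
  √(1 + ∑ i ∈ Finset.Ico m (ℓ + 1), Complex.normSq (spikeCoeff ℓ R i))

/-- `C_m ⋯ C_{n-1} (r - eₙ)`, where `r` is the spike column. -/
def rolledSpike (m : Fin (n + 1)) : Fin (n + 1) → ℂ := fun p =>
  if p < m then spikeCoeff ℓ R p else if p = m then -(tailNorm ℓ R m : ℂ) else 0

def rollCore (j : Fin n) : Matrix (Fin (n + 1)) (Fin (n + 1)) ℂ :=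
  if j ≤ ℓ then coreEmbed j (givens (spikeCoeff ℓ R j) (tailNorm ℓ R (j + 1)) (tailNorm ℓ R j))
  else swapCore j

def spikeEmbedding : Matrix (Fin (n + 1)) (Fin (n + 1)) ℂ :=
  Matrix.of fun p q : Fin (n + 1) =>
    if hp : (p : ℕ) < n then
      if hq : (q : ℕ) < n then R ⟨p, hp⟩ ⟨q, hq⟩
      else if (p : ℕ) = (ℓ : ℕ) then 1 else 0
    else 0

variable {ℓ R}

theorem sq_tailNorm (m : ℕ) :
    tailNorm ℓ R m ^ 2 = 1 + ∑ i ∈ Finset.Ico m (ℓ + 1), Complex.normSq (spikeCoeff ℓ R i) :=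
  Real.sq_sqrt (add_nonneg zero_le_one (Finset.sum_nonneg fun _ _ => Complex.normSq_nonneg _))

theorem tailNorm_pos (m : ℕ) : 0 < tailNorm ℓ R m :=
  Real.sqrt_pos.2 (add_pos_of_pos_of_nonneg one_pos
    (Finset.sum_nonneg fun _ _ => Complex.normSq_nonneg _))

theorem tailNorm_sq {m : ℕ} (hm : m ≤ ℓ) :
    tailNorm ℓ R m ^ 2 = Complex.normSq (spikeCoeff ℓ R m) + tailNorm ℓ R (m + 1) ^ 2 := by
  rw [sq_tailNorm, sq_tailNorm, Finset.sum_eq_sum_Ico_succ_bot (Nat.lt_succ_of_le hm)]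
  ring

theorem tailNorm_of_lt {m : ℕ} (hm : ℓ < m) : tailNorm ℓ R m = 1 := by
  rw [tailNorm, Finset.Ico_eq_empty_of_le hm, Finset.sum_empty, add_zero, Real.sqrt_one]

theorem rollCore_of_lt {j : Fin n} (hj : ℓ < j) : rollCore ℓ R j = swapCore j :=
  if_neg (not_le.2 hj)

theorem isCore_rollCore (j : Fin n) : IsCore j (rollCore ℓ R j) := by
  unfold rollCore
  split_ifs with hj
  · exact isCore_coreEmbed j (givens_mem_unitaryGroup_s17 (tailNorm_pos _).ne' (tailNorm_sq hj))
  · exact isCore_swapCore j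

theorem rollCore_mulVec_rolledSpike (j : Fin n) :
    rollCore ℓ R j *ᵥ rolledSpike ℓ R j.succ = rolledSpike ℓ R j.castSucc := by
  unfold rollCore
  split_ifs with hj
  · have hpair : ![rolledSpike ℓ R j.succ j.castSucc, rolledSpike ℓ R j.succ j.succ] =
        ![spikeCoeff ℓ R j, -(tailNorm ℓ R (j + 1) : ℂ)] := by
      simp [rolledSpike]
    funext p
    rw [coreEmbed_mulVec, hpair, givens_mulVec (tailNorm_pos _).ne' (tailNorm_sq hj)]
    simp only [rolledSpike, Fin.lt_def, Fin.ext_iff, Fin.val_castSucc, Fin.val_succ]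
    split_ifs <;> first | rfl | omega
  · have hj' : (ℓ : ℕ) < j := not_le.1 hj
    funext p
    rw [swapCore, permMatrix_mulVec, Function.comp_apply]
    by_cases hp₀ : p = j.castSucc
    · subst hp₀
      simp [rolledSpike, tailNorm_of_lt hj', tailNorm_of_lt (hj'.trans (Nat.lt_succ_self _))]
    by_cases hp₁ : p = j.succ
    · subst hp₁
      simp [rolledSpike, spikeCoeff, hj, hp₀, lt_asymm Fin.castSucc_lt_succ]
    rw [Equiv.swap_apply_of_ne_of_ne hp₀ hp₁]
    simp only [rolledSpike, Fin.lt_def, Fin.ext_iff, Fin.val_castSucc, Fin.val_succ] at hp₀ hp₁ ⊢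
    split_ifs <;> first | rfl | omega

theorem rolledSpike_zero : rolledSpike ℓ R 0 = (-(tailNorm ℓ R 0 : ℂ)) • Pi.single 0 1 := by
  funext p
  simp [rolledSpike, Pi.single_apply]

theorem seqProd_rollCore_mulVec_rolledSpike :
    seqProd (rollCore ℓ R) *ᵥ rolledSpike ℓ R (Fin.last n) =
      (-(tailNorm ℓ R 0 : ℂ)) • Pi.single 0 1 := by
  rw [← rolledSpike_zero]
  simpa [seqProd] using
    prod_map_drop_finRange_mulVec _ _ 0 fun j _ => rollCore_mulVec_rolledSpike (ℓ := ℓ) (R := R) j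

theorem rollTail_mulVec_single_castSucc :
    (((List.finRange n).drop (ℓ + 1)).map (rollCore ℓ R)).prod *ᵥ Pi.single ℓ.castSucc 1 =
      Pi.single ℓ.castSucc 1 := by
  refine prod_map_drop_finRange_mulVec _ (fun _ => Pi.single ℓ.castSucc 1) ℓ.succ fun j hj => ?_
  have hℓj : ℓ < j := Fin.succ_le_castSucc_iff.1 hj
  have hℓj' : ℓ.castSucc < j.castSucc := Fin.castSucc_lt_castSucc_iff.2 hℓj
  rw [rollCore_of_lt hℓj]
  exact swapCore_mulVec_single_of_ne hℓj'.ne (hℓj'.trans Fin.castSucc_lt_succ).ne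

theorem rollTail_mulVec_single_last :
    (((List.finRange n).drop (ℓ + 1)).map (rollCore ℓ R)).prod *ᵥ Pi.single (Fin.last n) 1 =
      Pi.single ℓ.succ 1 :=
  prod_map_drop_finRange_mulVec _ (fun m => Pi.single m 1) ℓ.succ fun j hj => by
    rw [rollCore_of_lt (Fin.succ_le_castSucc_iff.1 hj)]
    exact swapCore_mulVec_single_succ j

theorem seqProd_update_rollCore :
    seqProd (Function.update (rollCore ℓ R) ℓ (rollCore ℓ R ℓ * swapCore ℓ)) =
      seqProd (rollCore ℓ R) * (Equiv.swap ℓ.castSucc (Fin.last n)).permMatrix ℂ :=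
  seqProd_update_mul _ ℓ <| permMatrix_swap_mul_eq_mul_permMatrix_swap
    (list_prod_map_mem_unitaryGroup isCore_rollCore _) rollTail_mulVec_single_castSucc
    rollTail_mulVec_single_last

theorem isCore_update_rollCore (j : Fin n) :
    IsCore j (Function.update (rollCore ℓ R) ℓ (rollCore ℓ R ℓ * swapCore ℓ) j) := by
  rcases eq_or_ne j ℓ with rfl | hj
  · rw [Function.update_self]
    exact (isCore_rollCore j).mul (isCore_swapCore j)
  · rw [Function.update_of_ne hj]
    exact isCore_rollCore j

theorem spikeEmbedding_eq (hRid : ∀ i j : Fin n, j ≠ ℓ → R i j = if i = j then 1 else 0)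
    (hRspike : ∀ i : Fin n, ℓ < i → R i ℓ = 0) :
    spikeEmbedding ℓ R = (Equiv.swap ℓ.castSucc (Fin.last n)).permMatrix ℂ +
      vecMulVec (rolledSpike ℓ R (Fin.last n)) (Pi.single ℓ.castSucc 1) := by
  ext p q
  have hℓ : ℓ.castSucc ≠ Fin.last n := Fin.castSucc_ne_last ℓ
  simp only [spikeEmbedding, of_apply, Matrix.add_apply, PEquiv.toMatrix_apply,
    Equiv.toPEquiv_apply, Option.mem_def, Option.some.injEq, vecMulVec_apply, Pi.single_apply]
  induction p using Fin.lastCases with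
  | last =>
    simp only [Fin.val_last, lt_self_iff_false, ↓reduceDIte, Equiv.swap_apply_right, eq_comm,
      rolledSpike, ↓reduceIte, tailNorm_of_lt ℓ.isLt, Complex.ofReal_one, mul_ite, mul_one,
      mul_zero]
    split_ifs <;> norm_num
  | cast i =>
    induction q using Fin.lastCases with
    | last => simp [Equiv.swap_apply_def, hℓ.symm, Fin.castSucc_ne_last, Fin.val_inj]
    | cast k =>
      have hi : i.castSucc < Fin.last n := Fin.castSucc_lt_last i
      rcases eq_or_ne k ℓ with rfl | hk
      · simp only [rolledSpike, spikeCoeff, Equiv.swap_apply_def, hi, Fin.castSucc_ne_last]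
        split_ifs <;> simp_all
      · simp only [Fin.val_castSucc, Fin.is_lt, ↓reduceDIte, Fin.eta, Equiv.swap_apply_def,
          Fin.castSucc_inj, Fin.castSucc_ne_last, ↓reduceIte, hk, mul_zero, add_zero]
        rw [hRid i k hk]
        split_ifs <;> simp_all [(Fin.castSucc_ne_last k).symm]

theorem seqProd_rollCore_mul_spikeEmbedding
    (hRid : ∀ i j : Fin n, j ≠ ℓ → R i j = if i = j then 1 else 0)
    (hRspike : ∀ i : Fin n, ℓ < i → R i ℓ = 0) :
    seqProd (rollCore ℓ R) * spikeEmbedding ℓ R =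
      seqProd (Function.update (rollCore ℓ R) ℓ (rollCore ℓ R ℓ * swapCore ℓ)) +
        vecMulVec (Pi.single 0 1) ((-(tailNorm ℓ R 0 : ℂ)) • Pi.single ℓ.castSucc 1) := by
  rw [spikeEmbedding_eq hRid hRspike, mul_add, mul_vecMulVec, seqProd_update_rollCore,
    seqProd_rollCore_mulVec_rolledSpike, smul_vecMulVec, vecMulVec_smul]

end SpikeFactorization

open SpikeFactorization in
theorem embedded_spike_factorization_general (n : ℕ) (ℓ : Fin n)
    (R : Matrix (Fin n) (Fin n) ℂ)
    (hRid : ∀ i j : Fin n, j ≠ ℓ → R i j = if i = j then 1 else 0)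
    (hRspike : ∀ i : Fin n, ℓ < i → R i ℓ = 0) :
    ∃ (C B : Fin n → Matrix (Fin (n + 1)) (Fin (n + 1)) ℂ) (y : Fin (n + 1) → ℂ),
      (∀ j, IsCore j (C j)) ∧ (∀ j, IsCore j (B j)) ∧
      (Matrix.of (fun p q : Fin (n + 1) =>
          if hp : (p : ℕ) < n then
            if hq : (q : ℕ) < n then R ⟨p, hp⟩ ⟨q, hq⟩
            else if (p : ℕ) = (ℓ : ℕ) then 1 else 0
          else 0)) =
        (seqProd C)ᴴ * (seqProd B + vecMulVec (Pi.single (0 : Fin (n + 1)) (1 : ℂ)) y) := by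
  refine ⟨rollCore ℓ R, Function.update (rollCore ℓ R) ℓ (rollCore ℓ R ℓ * swapCore ℓ),
    (-(tailNorm ℓ R 0 : ℂ)) • Pi.single ℓ.castSucc 1, isCore_rollCore, isCore_update_rollCore, ?_⟩
  have hC : seqProd (rollCore ℓ R) ∈ unitaryGroup (Fin (n + 1)) ℂ :=
    list_prod_map_mem_unitaryGroup isCore_rollCore _
  change spikeEmbedding ℓ R = _
  rw [← seqProd_rollCore_mul_spikeEmbedding hRid hRspike, ← mul_assoc, ← star_eq_conjTranspose,
    Unitary.star_mul_self_of_mem hC, one_mul]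

/-- An upper triangular identity-plus-spike matrix `R` with spike in column `ℓ`,
embedded into `ℂ^{(n+1)×(n+1)}` with an extra `1` at position `(ℓ, n+1)` and a zero
last row, can be factored as `C^*(B + e₁ yᵀ)` where `C = C₁ ⋯ C_n` and `B = B₁ ⋯ B_n`
are descending products of core transformations. -/
theorem embedded_spike_factorization (n : ℕ) (hn : 1 ≤ n) (ℓ : Fin n)
    (R : Matrix (Fin n) (Fin n) ℂ)
    (hRid : ∀ i j : Fin n, j ≠ ℓ → R i j = if i = j then 1 else 0)
    (hRspike : ∀ i : Fin n, ℓ < i → R i ℓ = 0) :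
    ∃ (C B : Fin n → Matrix (Fin (n + 1)) (Fin (n + 1)) ℂ) (y : Fin (n + 1) → ℂ),
      (∀ j, IsCore j (C j)) ∧ (∀ j, IsCore j (B j)) ∧
      (Matrix.of (fun p q : Fin (n + 1) =>
          if hp : (p : ℕ) < n then
            if hq : (q : ℕ) < n then R ⟨p, hp⟩ ⟨q, hq⟩
            else if (p : ℕ) = (ℓ : ℕ) then 1 else 0
          else 0)) =
        (seqProd C)ᴴ * (seqProd B + vecMulVec (Pi.single (0 : Fin (n + 1)) (1 : ℂ)) y) :=
  embedded_spike_factorization_general n ℓ R hRid hRspike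
end
end
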